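/- arXiv:0708.2190 — 12 statements merged into one kernel-verified Lean document; each statement's English description precedes it below -/
import Mathlib

section
/- Let K be a real quadratic field with ring of integers R, and let α ∈ R be a unit of norm -1. Suppose 𝔭 is a prime ideal of R dividing α^n - 1 such that the multiplicative order of α modulo 𝔭 is exactly n. If 𝔭 divides β^m - 1 for some 0 < m < n, where β is the conjugate of α, then n = 2m and m is odd. -/
/-!
Since `K/ℚ` has degree two and a nontrivial automorphism, it is Galois and the norm of `α` is
`α β`, so `α β = -1`. In `R/𝔭` the image `u` of `α` has order exactly `n`, and `β^m ≡ 1` gives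
`u^m = (u β)^m = (-1)^m`. For even `m` this contradicts the minimality of `n`; for odd `m` it
gives `u^m = -1`, so `n ∣ 2m`, which together with `m < n` forces `n = 2m`.
-/

open NumberField

theorem Algebra.algebraMap_norm_eq_mul_of_finrank_eq_two {F L : Type*} [Field F] [Field L]
    [Algebra F L] (hdeg : Module.finrank F L = 2) {τ : L ≃ₐ[F] L} (hτ : τ ≠ AlgEquiv.refl)
    (x : L) : algebraMap F L (Algebra.norm F x) = x * τ x := by
  classical
  have : FiniteDimensional F L := Module.finite_of_finrank_eq_succ hdeg
  have huniv : (Finset.univ : Finset (L ≃ₐ[F] L)) = {AlgEquiv.refl, τ} :=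
    (Finset.eq_of_subset_of_card_le (Finset.subset_univ _) <| by
      rw [Finset.card_pair hτ.symm, Finset.card_univ, ← hdeg]
      exact AlgEquiv.card_le).symm
  have : IsGalois F L := IsGalois.of_card_aut_eq_finrank F L <| by
    rw [Nat.card_eq_fintype_card, ← Finset.card_univ, huniv, Finset.card_pair hτ.symm, hdeg]
  rw [Algebra.norm_eq_prod_automorphisms, huniv, Finset.prod_pair hτ.symm, AlgEquiv.coe_refl,
    id_eq]

theorem Ideal.pow_sub_one_mem_iff {R : Type*} [CommRing R] (I : Ideal R) (x : R) (k : ℕ) :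
    x ^ k - 1 ∈ I ↔ Ideal.Quotient.mk I x ^ k = 1 := by
  rw [← map_pow, ← map_one (Ideal.Quotient.mk I), Ideal.Quotient.eq]

theorem Ideal.orderOf_quotient_mk_eq {R : Type*} [CommRing R] {I : Ideal R} {x : R} {n : ℕ}
    (hn : 0 < n) (hmem : x ^ n - 1 ∈ I) (hord : ∀ m, 0 < m → m < n → x ^ m - 1 ∉ I) :
    orderOf (Ideal.Quotient.mk I x) = n := by
  simp only [Ideal.pow_sub_one_mem_iff] at hmem hord
  exact (orderOf_eq_iff hn).2 ⟨hmem, fun m hmn hm0 => hord m hm0 hmn⟩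

theorem orderOf_eq_two_mul_and_odd_of_pow_eq_neg_one_pow {M : Type*} [Monoid M]
    [HasDistribNeg M] {u : M} {m : ℕ} (hm0 : 0 < m) (hmn : m < orderOf u)
    (hu : u ^ m = (-1) ^ m) : orderOf u = 2 * m ∧ Odd m := by
  rcases Nat.even_or_odd m with hm | hm
  · rw [hm.neg_one_pow] at hu
    exact absurd hu (pow_ne_one_of_lt_orderOf hm0.ne' hmn)
  · rw [hm.neg_one_pow] at hu
    have hdvd : orderOf u ∣ 2 * m := orderOf_dvd_of_pow_eq_one <| by
      rw [mul_comm, pow_mul, hu, neg_one_sq]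
    exact ⟨(Nat.eq_of_dvd_of_lt_two_mul (by omega) hdvd (by omega)).symm, hm⟩

theorem norm_neg_one_unit_conj_divisor_general (K : Type*) [Field K] [NumberField K]
    (hdeg : Module.finrank ℚ K = 2)
    (α : (RingOfIntegers K)ˣ)
    (hnorm : Algebra.norm ℤ ((α : RingOfIntegers K)) = -1)
    (τ : K ≃ₐ[ℚ] K) (hτ : τ ≠ AlgEquiv.refl)
    (β : RingOfIntegers K) (hβ : (β : K) = τ (((α : RingOfIntegers K) : K)))
    (P : Ideal (RingOfIntegers K))
    (n : ℕ)
    (hmem : (α : RingOfIntegers K) ^ n - 1 ∈ P)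
    (hord : ∀ m : ℕ, 0 < m → m < n → (α : RingOfIntegers K) ^ m - 1 ∉ P)
    (m : ℕ) (hm0 : 0 < m) (hmn : m < n)
    (hβm : β ^ m - 1 ∈ P) :
    n = 2 * m ∧ Odd m := by
  have hαβ : (α : 𝓞 K) * β = -1 := RingOfIntegers.ext <| by
    change ((α : 𝓞 K) : K) * β = -1
    rw [hβ, ← Algebra.algebraMap_norm_eq_mul_of_finrank_eq_two hdeg hτ,
      ← Algebra.coe_norm_int, hnorm]
    simp
  set u := Ideal.Quotient.mk P (α : 𝓞 K)
  have horder : orderOf u = n := Ideal.orderOf_quotient_mk_eq (by omega) hmem hord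
  have hv : Ideal.Quotient.mk P β ^ m = 1 := (Ideal.pow_sub_one_mem_iff P β m).1 hβm
  have hu : u ^ m = (-1) ^ m := calc
    u ^ m = u ^ m * Ideal.Quotient.mk P β ^ m := by rw [hv, mul_one]
    _ = (-1) ^ m := by rw [← mul_pow, ← map_mul, hαβ, map_neg, map_one]
  rw [← horder]
  exact orderOf_eq_two_mul_and_odd_of_pow_eq_neg_one_pow hm0 (horder ▸ hmn) hu

/-- If `α` is a unit of norm -1 in a real quadratic field, `𝔭` a prime ideal dividing
`α^n - 1` such that the multiplicative order of `α` mod `𝔭` is exactly `n` (i.e. `𝔭` divides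
no `α^m - 1` with `0 < m < n`), and `𝔭` divides `β^m - 1` for some `0 < m < n` where `β` is
the conjugate of `α`, then `n = 2m` and `m` is odd. -/
theorem norm_neg_one_unit_conj_divisor (K : Type*) [Field K] [NumberField K]
    (hdeg : Module.finrank ℚ K = 2) (σ : K →+* ℝ)
    (α : (RingOfIntegers K)ˣ)
    (hnorm : Algebra.norm ℤ ((α : RingOfIntegers K)) = -1)
    (τ : K ≃ₐ[ℚ] K) (hτ : τ ≠ AlgEquiv.refl)
    (β : RingOfIntegers K) (hβ : (β : K) = τ (((α : RingOfIntegers K) : K)))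
    (P : Ideal (RingOfIntegers K)) (hP : P.IsPrime)
    (n : ℕ) (hn : 0 < n)
    (hmem : (α : RingOfIntegers K) ^ n - 1 ∈ P)
    (hord : ∀ m : ℕ, 0 < m → m < n → (α : RingOfIntegers K) ^ m - 1 ∉ P)
    (m : ℕ) (hm0 : 0 < m) (hmn : m < n)
    (hβm : β ^ m - 1 ∈ P) :
    n = 2 * m ∧ Odd m :=
  norm_neg_one_unit_conj_divisor_general K hdeg α hnorm τ hτ β hβ P n hmem hord m hm0 hmn hβm
end

section
/- Let K be a real quadratic field and u a unit of its ring of integers with norm -1. Define Δ_n = N_{K/ℚ}(u^n - 1). If n = 2k with k odd, then Δ_n = -Δ_k^2; in particular, for n ≡ 2 (mod 4) with n > 2, every prime dividing Δ_n divides Δ_{n/2}, so Δ_n has no primitive prime divisor. -/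
/-!
Write `w = u^k`. Since `k` is odd, `N(w) = -1`. In a quadratic extension
`N(w ± 1) = N(w) ± Tr(w) + 1`, so `N(w + 1) = -N(w - 1)` and hence
`Δ_{2k} = N(w - 1) N(w + 1) = -Δ_k^2`. As `N(w) ≠ 1`, `w ≠ 1` and `Δ_k ≠ 0`; any prime
dividing `Δ_{2k}` then divides `Δ_k` with `k < 2k`, so it is not primitive.
-/

open NumberField

namespace Algebra

variable {R S : Type*} [CommRing R] [Nontrivial R] [CommRing S] [Algebra R S]
  [Module.Free R S] [Module.Finite R S]

theorem norm_add_one_add_norm_sub_one (hrank : Module.finrank R S = 2) (x : S) :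
    norm R (x + 1) + norm R (x - 1) = 2 * (norm R x + 1) := by
  let b : Module.Basis (Fin 2) R S := (Module.finBasis R S).reindex (finCongr hrank)
  simp only [norm_eq_matrix_det b, map_add, map_sub, map_one, Matrix.det_fin_two,
    Matrix.add_apply, Matrix.sub_apply, Matrix.one_apply_eq, Matrix.one_apply_ne zero_ne_one,
    Matrix.one_apply_ne one_ne_zero]
  ring

theorem norm_sq_sub_one_of_norm_eq_neg_one (hrank : Module.finrank R S = 2) {x : S}
    (hx : norm R x = -1) : norm R (x ^ 2 - 1) = -norm R (x - 1) ^ 2 := by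
  have hplus : norm R (x + 1) = -norm R (x - 1) := by
    linear_combination norm_add_one_add_norm_sub_one hrank x + 2 * hx
  rw [show x ^ 2 - 1 = (x - 1) * (x + 1) by ring, map_mul, hplus]
  ring

end Algebra

theorem lehmerPierce_two_mod_four_general (K : Type*) [Field K] [NumberField K]
    (hdeg : Module.finrank ℚ K = 2)
    (u : (RingOfIntegers K)ˣ)
    (hnorm : Algebra.norm ℤ ((u : RingOfIntegers K)) = -1)
    (Δ : ℕ → ℤ) (hΔ : ∀ m : ℕ, Δ m = Algebra.norm ℤ ((u : RingOfIntegers K) ^ m - 1))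
    (n k : ℕ) (hk : Odd k) (hn : n = 2 * k) :
    Δ n = -(Δ k) ^ 2 ∧
      (2 < n → ¬ ∃ p : ℤ, Prime p ∧ p ∣ Δ n ∧
        ∀ m : ℕ, 0 < m → m < n → Δ m ≠ 0 → ¬ p ∣ Δ m) := by
  have hrank : Module.finrank ℤ (𝓞 K) = 2 := (RingOfIntegers.rank K).trans hdeg
  have hw : Algebra.norm ℤ ((u : 𝓞 K) ^ k) = -1 := by rw [map_pow, hnorm, hk.neg_one_pow]
  have hΔn : Δ n = -(Δ k) ^ 2 := by
    rw [hΔ, hΔ, hn, pow_mul', Algebra.norm_sq_sub_one_of_norm_eq_neg_one hrank hw]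
  have hΔk : Δ k ≠ 0 := by
    rw [hΔ, Ne, Algebra.norm_eq_zero_iff, sub_eq_zero]
    intro h1
    rw [h1, map_one] at hw
    norm_num at hw
  have hkn : k < n := by have := hk.pos; omega
  refine ⟨hΔn, fun _ ⟨p, hp, hpn, hprimitive⟩ => hprimitive k hk.pos hkn hΔk ?_⟩
  exact hp.dvd_of_dvd_pow (dvd_neg.mp (hΔn ▸ hpn))

/-- For a unit `u` of norm `-1` in a real quadratic field, with `Δ n = N(u^n - 1)`,
if `n = 2k` with `k` odd then `Δ n = -(Δ k)^2`; in particular for `n > 2` (so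
`n ≡ 2 [MOD 4]`), `Δ n` has no primitive prime divisor. -/
theorem lehmerPierce_two_mod_four (K : Type*) [Field K] [NumberField K]
    (hdeg : Module.finrank ℚ K = 2) (σ : K →+* ℝ)
    (u : (RingOfIntegers K)ˣ)
    (hu : ((u : RingOfIntegers K) : K) ≠ 1 ∧ ((u : RingOfIntegers K) : K) ≠ -1)
    (hnorm : Algebra.norm ℤ ((u : RingOfIntegers K)) = -1)
    (Δ : ℕ → ℤ) (hΔ : ∀ m : ℕ, Δ m = Algebra.norm ℤ ((u : RingOfIntegers K) ^ m - 1))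
    (n k : ℕ) (hk : Odd k) (hn : n = 2 * k) :
    Δ n = -(Δ k) ^ 2 ∧
      (2 < n → ¬ ∃ p : ℤ, Prime p ∧ p ∣ Δ n ∧
        ∀ m : ℕ, 0 < m → m < n → Δ m ≠ 0 → ¬ p ∣ Δ m) :=
  lehmerPierce_two_mod_four_general K hdeg u hnorm Δ hΔ n k hk hn
end

section
/- Let u > 1 be a real quadratic unit of norm 1 (so u ≥ (3+√5)/2). Then for every n ≥ 1, |N_{K/ℚ}(Φ_n(u))| > u^{φ(n)} · e^{-1.55724}, where φ is Euler's totient function. -/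
/-!
Write `v = σ u > 1` and `q = v⁻¹`. Since `N(u) = 1`, the other embedding sends `u` to `q`, so
`N(Φₙ(u)) = Φₙ(v) Φₙ(q)`; and `N(u - 1) = 2 - (v + q)` is a negative integer, whence
`v + q ≥ 3`, i.e. `q ≤ (3 - √5)/2`. Möbius inversion of `∏_{d ∣ n} Φ_d = X^n - 1` gives
`Φₙ(v) = v^φ(n) |Φₙ(q)|` and `|Φₙ(q)| = ∏_{d ∣ n} (1 - q^d)^μ(n/d) ≥ ∏_{d ≤ n} (1 - q^d)`,
which is at least `1 - q - q² ≥ 2√5 - 4`. Hence `|N(Φₙ(u))| = v^φ(n) Φₙ(q)² ≥ v^φ(n) (2√5 - 4)²`,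
and `(2√5 - 4)² > e^(-1.55724)`.
-/

open NumberField Polynomial Finset
open scoped ArithmeticFunction.Moebius

theorem one_sub_sum_le_prod_one_sub {ι R : Type*} [CommRing R] [LinearOrder R]
    [IsStrictOrderedRing R] (s : Finset ι) {f : ι → R} (h0 : ∀ i ∈ s, 0 ≤ f i)
    (h1 : ∀ i ∈ s, f i ≤ 1) : 1 - ∑ i ∈ s, f i ≤ ∏ i ∈ s, (1 - f i) := by
  classical
  induction s using Finset.cons_induction with
  | empty => simp
  | cons a s ha ih =>
    simp only [forall_mem_cons] at h0 h1
    rw [sum_cons, prod_cons]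
    have hs : 0 ≤ ∑ i ∈ s, f i := sum_nonneg h0.2
    nlinarith [ih h0.2 h1.2, h0.1, h1.1]

section CyclotomicEval

variable {q : ℝ}

theorem eq_prod_divisors_one_sub_pow_zpow_moebius (hq0 : 0 ≤ q) (hq1 : q < 1) {f : ℕ → ℝ}
    (hf : ∀ m, 0 < m → ∏ d ∈ m.divisors, f d = 1 - q ^ m) {n : ℕ} (hn : 0 < n) :
    f n = ∏ d ∈ n.divisors, (1 - q ^ d) ^ μ (n / d) := by
  have hg (m : ℕ) (hm : 0 < m) : 1 - q ^ m ≠ 0 := (sub_pos.2 (pow_lt_one₀ hq0 hq1 hm.ne')).ne'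
  have hf0 (m : ℕ) (hm : 0 < m) : f m ≠ 0 := fun h =>
    hg m hm (hf m hm ▸ prod_eq_zero (Nat.mem_divisors_self m hm.ne') h)
  rw [← (ArithmeticFunction.prod_eq_iff_prod_pow_moebius_eq_of_nonzero hf0 hg).1 hf n hn,
    Nat.prod_divisorsAntidiagonal' fun a b => (1 - q ^ b) ^ μ a]

theorem abs_cyclotomic_eval_eq_prod_zpow_moebius (hq0 : 0 ≤ q) (hq1 : q < 1) (n : ℕ) :
    |eval q (cyclotomic n ℝ)| = ∏ d ∈ n.divisors, (1 - q ^ d) ^ μ (n / d) := by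
  rcases n.eq_zero_or_pos with rfl | hn
  · simp
  refine eq_prod_divisors_one_sub_pow_zpow_moebius hq0 hq1
    (f := fun m => |eval q (cyclotomic m ℝ)|) (fun m hm => ?_) hn
  rw [← abs_prod, ← eval_prod, prod_cyclotomic_eq_X_pow_sub_one hm, eval_sub, eval_pow, eval_X,
    eval_one, abs_sub_comm, abs_of_pos (sub_pos.2 (pow_lt_one₀ hq0 hq1 hm.ne'))]

theorem cyclotomic_eval_eq_pow_totient_mul_abs_eval_inv {v : ℝ} (hv : 1 < v) (n : ℕ) :
    eval v (cyclotomic n ℝ) = v ^ n.totient * |eval v⁻¹ (cyclotomic n ℝ)| := by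
  rcases n.eq_zero_or_pos with rfl | hn
  · simp
  -- Both sides have divisor products `1 - v⁻¹ ^ m`, by `∑_{d ∣ m} φ d = m`.
  have hv0 : v ≠ 0 := by positivity
  have hq0 : 0 ≤ v⁻¹ := by positivity
  have hq1 : v⁻¹ < 1 := inv_lt_one_of_one_lt₀ hv
  rw [abs_cyclotomic_eval_eq_prod_zpow_moebius hq0 hq1,
    ← eq_prod_divisors_one_sub_pow_zpow_moebius hq0 hq1
      (f := fun m => v⁻¹ ^ m.totient * eval v (cyclotomic m ℝ)) _ hn,
    ← mul_assoc, ← mul_pow, mul_inv_cancel₀ hv0, one_pow, one_mul]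
  intro m hm
  rw [prod_mul_distrib, prod_pow_eq_pow_sum, Nat.sum_totient, ← eval_prod,
    prod_cyclotomic_eq_X_pow_sub_one hm, eval_sub, eval_pow, eval_X, eval_one, mul_sub,
    ← mul_pow, inv_mul_cancel₀ hv0, one_pow, mul_one]

theorem one_sub_sub_sq_le_prod_Ico_one_sub_pow (hq0 : 0 ≤ q) (hq1 : q < 1) (N : ℕ) :
    1 - q - q ^ 2 ≤ ∏ d ∈ Ico 1 N, (1 - q ^ d) := by
  rcases le_or_gt N 1 with hN | hN
  · rw [Ico_eq_empty_of_le hN, prod_empty]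
    nlinarith
  -- Split off the factor `1 - q`; the rest is `≥ 1 - ∑_{d ≥ 2} q^d ≥ 1 - q² / (1 - q)`.
  rw [prod_eq_prod_Ico_succ_bot hN, pow_one]
  have htail : 1 - q ^ 2 / (1 - q) ≤ ∏ d ∈ Ico 2 N, (1 - q ^ d) :=
    (sub_le_sub_left (geom_sum_Ico_le_of_lt_one hq0 hq1) 1).trans
      (one_sub_sum_le_prod_one_sub _ (fun d _ => pow_nonneg hq0 d)
        (fun d _ => pow_le_one₀ hq0 hq1.le))
  have h1q : 0 < 1 - q := sub_pos.2 hq1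
  calc 1 - q - q ^ 2 = (1 - q) * (1 - q ^ 2 / (1 - q)) := by field_simp
    _ ≤ _ := mul_le_mul_of_nonneg_left htail h1q.le

theorem one_sub_sub_sq_le_abs_cyclotomic_eval (hq0 : 0 ≤ q) (hq1 : q < 1) (n : ℕ) :
    1 - q - q ^ 2 ≤ |eval q (cyclotomic n ℝ)| := by
  have hnonneg (d : ℕ) : 0 ≤ 1 - q ^ d := sub_nonneg.2 (pow_le_one₀ hq0 hq1.le)
  have hle_one (d : ℕ) : 1 - q ^ d ≤ 1 := sub_le_self _ (pow_nonneg hq0 d)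
  rw [abs_cyclotomic_eval_eq_prod_zpow_moebius hq0 hq1]
  calc 1 - q - q ^ 2 ≤ ∏ d ∈ Ico 1 (n + 1), (1 - q ^ d) :=
        one_sub_sub_sq_le_prod_Ico_one_sub_pow hq0 hq1 (n + 1)
    _ ≤ ∏ d ∈ n.divisors, (1 - q ^ d) :=
        prod_le_prod_of_subset_of_le_one (filter_subset _ _) (fun d _ => hnonneg d)
          (fun d _ _ => hle_one d)
    _ ≤ ∏ d ∈ n.divisors, (1 - q ^ d) ^ μ (n / d) := by
        refine prod_le_prod (fun d _ => hnonneg d) fun d hd => ?_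
        have hpos : 0 < 1 - q ^ d :=
          sub_pos.2 (pow_lt_one₀ hq0 hq1 (Nat.pos_of_mem_divisors hd).ne')
        simpa using zpow_le_zpow_right_of_le_one₀ hpos (hle_one d)
          (abs_le.1 (ArithmeticFunction.abs_moebius_le_one (n := n / d))).2

end CyclotomicEval

theorem exp_neg_1_55724_lt : Real.exp (-1.55724) < 0.2223 := by
  have h : (4.5 : ℝ) < Real.exp 1.55724 := by
    calc (4.5 : ℝ) < 2.7182818283 * (1 + 0.55724 + 0.55724 ^ 2 / 2) := by norm_num
      _ ≤ Real.exp 1 * Real.exp 0.55724 :=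
        mul_le_mul Real.exp_one_gt_d9.le (Real.quadratic_le_exp_of_nonneg (by norm_num))
          (by norm_num) (Real.exp_pos 1).le
      _ = Real.exp 1.55724 := by rw [← Real.exp_add]; norm_num
  rw [Real.exp_neg, inv_lt_comm₀ (Real.exp_pos _) (by norm_num)]
  exact (by norm_num : (0.2223 : ℝ)⁻¹ ≤ 4.5).trans_lt h

theorem exp_neg_lt_sq_cyclotomic_eval {q : ℝ} (hq0 : 0 < q) (hq1 : q < 1) (hq : 3 ≤ q + q⁻¹)
    (n : ℕ) : Real.exp (-1.55724) < eval q (cyclotomic n ℝ) ^ 2 := by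
  have hq' : 3 * q ≤ q ^ 2 + 1 := by
    have := mul_le_mul_of_nonneg_left hq hq0.le
    rwa [mul_add, mul_inv_cancel₀ hq0.ne', ← sq, mul_comm] at this
  have hq382 : q ≤ 0.382 := by nlinarith
  have hlow : 0.472 ≤ 1 - q - q ^ 2 := by nlinarith
  have hΦ := one_sub_sub_sq_le_abs_cyclotomic_eval hq0.le hq1 n
  calc Real.exp (-1.55724) < 0.2223 := exp_neg_1_55724_lt
    _ < 0.472 ^ 2 := by norm_num
    _ ≤ |eval q (cyclotomic n ℝ)| ^ 2 := pow_le_pow_left₀ (by norm_num) (hlow.trans hΦ) 2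
    _ = eval q (cyclotomic n ℝ) ^ 2 := sq_abs _

theorem map_aeval_int {A B F : Type*} [CommRing A] [CommRing B] [FunLike F A B]
    [RingHomClass F A B] (f : F) (a : A) (p : ℤ[X]) : f (aeval a p) = aeval (f a) p :=
  (aeval_algHom_apply (f : A →+* B).toIntAlgHom a p).symm

theorem exists_norm_eq_mul_of_finrank_eq_two {K : Type*} [Field K] [NumberField K]
    (hdeg : Module.finrank ℚ K = 2) (φ : K →ₐ[ℚ] ℂ) :
    ∃ ψ : K →ₐ[ℚ] ℂ, ∀ x : K, (Algebra.norm ℚ x : ℂ) = φ x * ψ x := by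
  classical
  have hcard : Fintype.card (K →ₐ[ℚ] ℂ) = 2 := by rw [AlgHom.card, hdeg]
  obtain ⟨ψ, hψ⟩ := Fintype.exists_ne_of_one_lt_card (by omega) φ
  have huniv : (Finset.univ : Finset (K →ₐ[ℚ] ℂ)) = {φ, ψ} :=
    (Finset.eq_univ_of_card _ (by rw [Finset.card_pair hψ.symm, hcard])).symm
  refine ⟨ψ, fun x => ?_⟩
  rw [← eq_ratCast (algebraMap ℚ ℂ), Algebra.norm_eq_prod_embeddings, huniv,
    Finset.prod_pair hψ.symm]

theorem RingOfIntegers.norm_aeval_eq_mul_of_norm_eq_one {K : Type*} [Field K] [NumberField K]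
    (hdeg : Module.finrank ℚ K = 2) (σ : K →+* ℝ) {u : 𝓞 K} (hu : Algebra.norm ℤ u = 1)
    (p : ℤ[X]) :
    (Algebra.norm ℤ (aeval u p) : ℝ) = aeval (σ u) p * aeval (σ u)⁻¹ p := by
  obtain ⟨ψ, hψ⟩ :=
    exists_norm_eq_mul_of_finrank_eq_two hdeg (Complex.ofRealHom.comp σ).toRatAlgHom
  have hnorm (y : 𝓞 K) : (Algebra.norm ℤ y : ℂ) = σ y * ψ y := by
    rw [← Rat.cast_intCast, Algebra.coe_norm_int, hψ]; rfl
  have hψu : ψ u = ((σ u)⁻¹ : ℝ) := by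
    have h := hnorm u
    rw [hu, Int.cast_one] at h
    rw [Complex.ofReal_inv]
    exact (inv_eq_of_mul_eq_one_right h.symm).symm
  have haeval : ((aeval u p : 𝓞 K) : K) = aeval (u : K) p :=
    map_aeval_int (algebraMap (𝓞 K) K) u p
  apply Complex.ofReal_injective
  rw [Complex.ofReal_intCast, hnorm, haeval, map_aeval_int, map_aeval_int, hψu]
  simp only [← Complex.ofRealHom_eq_coe, map_mul, map_aeval_int]

theorem RingOfIntegers.three_le_add_inv_of_norm_eq_one {K : Type*} [Field K] [NumberField K]
    (hdeg : Module.finrank ℚ K = 2) (σ : K →+* ℝ) {u : 𝓞 K} (hu : Algebra.norm ℤ u = 1)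
    (h1 : 1 < σ u) : 3 ≤ σ u + (σ u)⁻¹ := by
  have h := norm_aeval_eq_mul_of_norm_eq_one hdeg σ hu (X - 1)
  simp only [map_sub, aeval_X, map_one] at h
  have hvv : σ u * (σ u)⁻¹ = 1 := mul_inv_cancel₀ (by positivity)
  have hneg : (σ u - 1) * ((σ u)⁻¹ - 1) < 0 :=
    mul_neg_of_pos_of_neg (by linarith) (by linarith [inv_lt_one_of_one_lt₀ h1])
  have hle : (σ u - 1) * ((σ u)⁻¹ - 1) ≤ -1 := by
    rw [← h] at hneg ⊢
    have : Algebra.norm ℤ (u - 1) < 0 := by exact_mod_cast hneg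
    exact_mod_cast Int.le_sub_one_of_lt this
  nlinarith

theorem norm_cyclotomic_lower_bound_norm_one_general (K : Type*) [Field K] [NumberField K]
    (hdeg : Module.finrank ℚ K = 2) (σ : K →+* ℝ)
    (u : (RingOfIntegers K)ˣ) (hu : 1 < σ (((u : RingOfIntegers K) : K)))
    (hnorm : Algebra.norm ℤ ((u : RingOfIntegers K)) = 1)
    (n : ℕ) :
    ((|Algebra.norm ℤ (aeval (u : RingOfIntegers K) (cyclotomic n ℤ))| : ℤ) : ℝ) >
      (σ (((u : RingOfIntegers K) : K))) ^ n.totient * Real.exp (-1.55724) := by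
  have h3 := RingOfIntegers.three_le_add_inv_of_norm_eq_one hdeg σ hnorm hu
  have hN := RingOfIntegers.norm_aeval_eq_mul_of_norm_eq_one hdeg σ hnorm (cyclotomic n ℤ)
  have haeval (x : ℝ) : aeval x (cyclotomic n ℤ) = eval x (cyclotomic n ℝ) := by
    rw [aeval_def, eval₂_eq_eval_map, map_cyclotomic]
  set v := σ (((u : RingOfIntegers K) : K))
  have hv0 : 0 < v := by linarith
  have hΦ := exp_neg_lt_sq_cyclotomic_eval (inv_pos.2 hv0) (inv_lt_one_of_one_lt₀ hu)
    (by rwa [inv_inv, add_comm]) n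
  rw [Int.cast_abs, hN, haeval, haeval, abs_mul,
    cyclotomic_eval_eq_pow_totient_mul_abs_eval_inv hu n, abs_mul, abs_abs,
    abs_of_pos (pow_pos hv0 _), mul_assoc, ← sq, sq_abs]
  exact mul_lt_mul_of_pos_left hΦ (pow_pos hv0 _)

/-- For a real quadratic unit `u > 1` of norm `1`, for every `n ≥ 1`,
`|N(Φ_n(u))| > u^{φ(n)} · e^{-1.55724}`. -/
theorem norm_cyclotomic_lower_bound_norm_one (K : Type*) [Field K] [NumberField K]
    (hdeg : Module.finrank ℚ K = 2) (σ : K →+* ℝ)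
    (u : (RingOfIntegers K)ˣ) (hu : 1 < σ (((u : RingOfIntegers K) : K)))
    (hnorm : Algebra.norm ℤ ((u : RingOfIntegers K)) = 1)
    (n : ℕ) (hn : 1 ≤ n) :
    ((|Algebra.norm ℤ (aeval (u : RingOfIntegers K) (cyclotomic n ℤ))| : ℤ) : ℝ) >
      (σ (((u : RingOfIntegers K) : K))) ^ n.totient * Real.exp (-1.55724) :=
  norm_cyclotomic_lower_bound_norm_one_general K hdeg σ u hu hnorm n
end

section
/- Let u > 1 be a real quadratic unit of norm -1 (so u ≥ (1+√5)/2). Then for every n ≥ 1, |N_{K/ℚ}(Φ_n(u))| > u^{φ(n)} · e^{-5.03933}. -/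
/-!
Write `a = σ(u) > 1`. Since `N(u) = -1`, the conjugate of `u` is `-a⁻¹`, so
`N(Φₙ(u)) = Φₙ(a) Φₙ(-a⁻¹)`, and `N(u - 1) = -(a - a⁻¹)` is a nonzero integer, whence
`a - a⁻¹ ≥ 1`, i.e. `a` is at least the golden ratio.

Möbius inversion of `∏_{d ∣ m} Φ_d(x) = x ^ m - 1` gives
`|Φₙ(a) Φₙ(-a⁻¹)| / a ^ φ(n) = ∏_{d ∣ n} ((1 - r ^ d) (1 - (-r) ^ d)) ^ μ(n / d)` with `r = a⁻¹`.
Every base lies in `[(1 - r ^ d) ^ 2, 1]` and `|μ| ≤ 1`, so the right side is at least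
`∏_{d=1}^n (1 - r ^ d) ^ 2`. Since `r` is at most the inverse golden ratio, `r ≤ 31/50`, and then
this product exceeds `e⁻⁵`: compare `-log (1 - t)` with `t + t² + t⁴ / (1 - t⁴)` and sum the
geometric series.
-/

open NumberField Polynomial Finset Real
open scoped ArithmeticFunction.Moebius

lemma neg_log_one_sub_le {t : ℝ} (h0 : 0 ≤ t) (h1 : t < 1) :
    -log (1 - t) ≤ t + t ^ 2 + t ^ 4 / (1 - t ^ 4) := by
  have ht4 : t ^ 4 < 1 := pow_lt_one₀ h0 h1 (by norm_num)
  -- `(1 - t) (1 + t) (1 + t²) = 1 - t⁴`, and `log x ≤ x - 1` bounds the other three logarithms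
  have hfactor : log (1 - t) + (log (1 + t) + log (1 + t ^ 2)) = log (1 - t ^ 4) := by
    rw [← log_mul (by positivity) (by positivity), ← log_mul (by linarith) (by positivity)]
    ring_nf
  have h1 : log (1 + t) ≤ t := by linarith [log_le_sub_one_of_pos (x := 1 + t) (by linarith)]
  have h2 : log (1 + t ^ 2) ≤ t ^ 2 := by
    linarith [log_le_sub_one_of_pos (x := 1 + t ^ 2) (by positivity)]
  have h4 : -log (1 - t ^ 4) ≤ t ^ 4 / (1 - t ^ 4) := by
    have h := log_le_sub_one_of_pos (x := (1 - t ^ 4)⁻¹) (by simpa using ht4)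
    have : 1 - t ^ 4 ≠ 0 := by linarith
    rw [log_inv, show (1 - t ^ 4)⁻¹ - 1 = t ^ 4 / (1 - t ^ 4) by field_simp; ring] at h
    exact h
  linarith

lemma neg_sum_log_one_sub_pow_le {r : ℝ} (h0 : 0 ≤ r) (hr : r ≤ 31 / 50) (N : ℕ) :
    -∑ d ∈ Ico 1 N, log (1 - r ^ d) ≤ 5 / 2 := by
  have hr1 : r < 1 := by linarith
  have hr2 : r ^ 2 < 1 := pow_lt_one₀ h0 hr1 (by norm_num)
  have hr4 : r ^ 4 < 1 := pow_lt_one₀ h0 hr1 (by norm_num)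
  calc -∑ d ∈ Ico 1 N, log (1 - r ^ d)
      ≤ ∑ d ∈ Ico 1 N, (r ^ d + (r ^ 2) ^ d + (r ^ 4) ^ d / (1 - r ^ 4)) := by
        rw [← sum_neg_distrib]
        refine sum_le_sum fun d hd ↦ ?_
        have hd : d ≠ 0 := by rw [mem_Ico] at hd; omega
        have hrd4 : (r ^ 4) ^ d ≤ r ^ 4 := pow_le_of_le_one (by positivity) hr4.le hd
        calc -log (1 - r ^ d) ≤ r ^ d + (r ^ d) ^ 2 + (r ^ d) ^ 4 / (1 - (r ^ d) ^ 4) :=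
              neg_log_one_sub_le (by positivity) (pow_lt_one₀ h0 hr1 hd)
          _ ≤ r ^ d + (r ^ 2) ^ d + (r ^ 4) ^ d / (1 - r ^ 4) := by
              rw [← pow_mul, ← pow_mul, ← pow_mul, ← pow_mul, mul_comm d 2, mul_comm d 4,
                pow_mul, pow_mul r 4]
              gcongr
    _ = ∑ d ∈ Ico 1 N, r ^ d + ∑ d ∈ Ico 1 N, (r ^ 2) ^ d
          + (∑ d ∈ Ico 1 N, (r ^ 4) ^ d) / (1 - r ^ 4) := by
        rw [sum_add_distrib, sum_add_distrib, sum_div]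
    _ ≤ r / (1 - r) + r ^ 2 / (1 - r ^ 2) + r ^ 4 / (1 - r ^ 4) / (1 - r ^ 4) := by
        gcongr
        · simpa using geom_sum_Ico_le_of_lt_one h0 hr1 (m := 1) (n := N)
        · simpa using geom_sum_Ico_le_of_lt_one (by positivity) hr2 (m := 1) (n := N)
        · simpa using geom_sum_Ico_le_of_lt_one (by positivity) hr4 (m := 1) (n := N)
    _ ≤ 31 / 50 / (1 - 31 / 50) + (31 / 50) ^ 2 / (1 - (31 / 50) ^ 2)
          + (31 / 50) ^ 4 / (1 - (31 / 50) ^ 4) / (1 - (31 / 50) ^ 4) := by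
        have : r ^ 2 ≤ (31 / 50) ^ 2 := by gcongr
        have : r ^ 4 ≤ (31 / 50) ^ 4 := by gcongr
        gcongr
    _ ≤ 5 / 2 := by norm_num

lemma exp_neg_five_div_two_le_prod_one_sub_pow {r : ℝ} (h0 : 0 ≤ r) (hr : r ≤ 31 / 50)
    (N : ℕ) : exp (-(5 / 2)) ≤ ∏ d ∈ Ico 1 N, (1 - r ^ d) := by
  have hpos : ∀ d ∈ Ico 1 N, 0 < 1 - r ^ d := fun d hd ↦ by
    have : r ^ d < 1 := pow_lt_one₀ h0 (by linarith) (by rw [mem_Ico] at hd; omega)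
    linarith
  rw [← prod_congr rfl fun d hd ↦ exp_log (hpos d hd), ← exp_sum, exp_le_exp]
  linarith [neg_sum_log_one_sub_pow_le h0 hr N]

lemma le_zpow_of_abs_le_one {c x : ℝ} (hc : 0 < c) (hcx : c ≤ x) (hx : x ≤ 1) {k : ℤ}
    (hk : |k| ≤ 1) : c ≤ x ^ k := by
  obtain rfl | rfl | rfl : k = -1 ∨ k = 0 ∨ k = 1 := by rw [abs_le] at hk; omega
  · rw [zpow_neg_one]; linarith [(one_le_inv₀ (hc.trans_le hcx)).mpr hx]
  · simpa using hcx.trans hx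
  · simpa using hcx

lemma sq_one_sub_pow_le_mul_one_sub_neg_pow {r : ℝ} (h0 : 0 ≤ r) (h1 : r ≤ 1) (m : ℕ) :
    (1 - r ^ m) ^ 2 ≤ (1 - r ^ m) * (1 - (-r) ^ m) ∧ (1 - r ^ m) * (1 - (-r) ^ m) ≤ 1 := by
  have : r ^ m ≤ 1 := pow_le_one₀ h0 h1
  have : 0 ≤ r ^ m := by positivity
  rcases m.even_or_odd with hm | hm
  · rw [hm.neg_pow]; constructor <;> nlinarith
  · rw [hm.neg_pow]; constructor <;> nlinarith

lemma prod_divisors_abs_cyclotomic_div_pow_totient {a : ℝ} (ha : 1 < a) {m : ℕ} (hm : 0 < m) :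
    ∏ d ∈ m.divisors, |(cyclotomic d ℝ).eval a * (cyclotomic d ℝ).eval (-a⁻¹)| / a ^ d.totient
      = (1 - a⁻¹ ^ m) * (1 - (-a⁻¹) ^ m) := by
  have hprod (x : ℝ) : ∏ d ∈ m.divisors, (cyclotomic d ℝ).eval x = x ^ m - 1 := by
    rw [← eval_prod, prod_cyclotomic_eq_X_pow_sub_one hm]; simp
  have ham : 1 < a ^ m := one_lt_pow₀ ha hm.ne'
  have hbm : (-a⁻¹) ^ m < 1 := (le_abs_self _).trans_lt <| by
    rw [abs_pow, abs_neg, abs_inv, abs_of_pos (by linarith)]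
    exact pow_lt_one₀ (by positivity) (inv_lt_one_of_one_lt₀ ha) hm.ne'
  rw [prod_div_distrib, ← abs_prod, prod_mul_distrib, hprod, hprod, prod_pow_eq_pow_sum,
    Nat.sum_totient, abs_mul, abs_of_pos (by linarith), abs_of_neg (by linarith), inv_pow]
  field_simp
  ring

theorem pow_totient_mul_prod_le_abs_cyclotomic {a : ℝ} (ha : 1 < a) {n : ℕ} (hn : 0 < n) :
    a ^ n.totient * ∏ d ∈ Ico 1 (n + 1), (1 - a⁻¹ ^ d) ^ 2
      ≤ |(cyclotomic n ℝ).eval a * (cyclotomic n ℝ).eval (-a⁻¹)| := by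
  set f : ℕ → ℝ := fun d ↦
    |(cyclotomic d ℝ).eval a * (cyclotomic d ℝ).eval (-a⁻¹)| / a ^ d.totient
  set g : ℕ → ℝ := fun m ↦ (1 - a⁻¹ ^ m) * (1 - (-a⁻¹) ^ m)
  have hr0 : 0 < a⁻¹ := by positivity
  have hr1 : a⁻¹ < 1 := inv_lt_one_of_one_lt₀ ha
  have hfg : ∀ m > 0, ∏ d ∈ m.divisors, f d = g m :=
    fun m hm ↦ prod_divisors_abs_cyclotomic_div_pow_totient ha hm
  have hsq_pos (m : ℕ) (hm : 0 < m) : 0 < (1 - a⁻¹ ^ m) ^ 2 := by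
    have := pow_lt_one₀ hr0.le hr1 hm.ne'
    nlinarith
  have hg (m : ℕ) := sq_one_sub_pow_le_mul_one_sub_neg_pow hr0.le hr1.le m
  have hg0 (m : ℕ) (hm : 0 < m) : g m ≠ 0 := ((hsq_pos m hm).trans_le (hg m).1).ne'
  have hf0 (m : ℕ) (hm : 0 < m) : f m ≠ 0 :=
    prod_ne_zero_iff.mp (hfg m hm ▸ hg0 m hm) m (Nat.mem_divisors_self m hm.ne')
  have hmoebius := (ArithmeticFunction.prod_eq_iff_prod_pow_moebius_eq_of_nonzero hf0 hg0).mp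
    hfg n hn
  have hdiv : n.divisors ⊆ Ico 1 (n + 1) := fun d hd ↦
    mem_Ico.mpr ⟨Nat.pos_of_mem_divisors hd, Nat.lt_succ_of_le (Nat.divisor_le hd)⟩
  calc a ^ n.totient * ∏ d ∈ Ico 1 (n + 1), (1 - a⁻¹ ^ d) ^ 2
      ≤ a ^ n.totient * ∏ d ∈ n.divisors, (1 - a⁻¹ ^ d) ^ 2 := by
        gcongr ?_ * ?_
        exact prod_le_prod_of_subset_of_le_one hdiv (fun _ _ ↦ sq_nonneg _)
          fun d _ _ ↦ (hg d).1.trans (hg d).2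
    _ = a ^ n.totient * ∏ x ∈ n.divisorsAntidiagonal, (1 - a⁻¹ ^ x.2) ^ 2 := by
        rw [Nat.prod_divisorsAntidiagonal' fun _ d ↦ (1 - a⁻¹ ^ d) ^ 2]
    _ ≤ a ^ n.totient * ∏ x ∈ n.divisorsAntidiagonal, g x.2 ^ μ x.1 := by
        gcongr with x hx
        have hx2 := Nat.pos_of_mem_divisors (Nat.snd_mem_divisors_of_mem_antidiagonal hx)
        exact le_zpow_of_abs_le_one (hsq_pos _ hx2) (hg _).1 (hg _).2
          ArithmeticFunction.abs_moebius_le_one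
    _ = a ^ n.totient * f n := by rw [hmoebius]
    _ = |(cyclotomic n ℝ).eval a * (cyclotomic n ℝ).eval (-a⁻¹)| := by
        simp only [f]; field_simp

lemma fifty_div_thirty_one_le_goldenRatio : 50 / 31 ≤ goldenRatio := by
  have : 69 / 31 ≤ √5 := le_sqrt_of_sq_le (by norm_num)
  rw [goldenRatio]
  linarith

theorem pow_totient_mul_exp_lt_abs_cyclotomic {a : ℝ} (ha : goldenRatio ≤ a) {n : ℕ}
    (hn : 0 < n) :
    a ^ n.totient * exp (-5.03933)
      < |(cyclotomic n ℝ).eval a * (cyclotomic n ℝ).eval (-a⁻¹)| := by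
  have ha50 := fifty_div_thirty_one_le_goldenRatio.trans ha
  have hr : a⁻¹ ≤ 31 / 50 := by
    rw [inv_le_comm₀ (by linarith) (by norm_num)]; linarith
  calc a ^ n.totient * exp (-5.03933) < a ^ n.totient * exp (-(5 / 2)) ^ 2 := by
        rw [← exp_nat_mul]; gcongr; norm_num
    _ ≤ a ^ n.totient * (∏ d ∈ Ico 1 (n + 1), (1 - a⁻¹ ^ d)) ^ 2 := by
        gcongr
        exact exp_neg_five_div_two_le_prod_one_sub_pow (by positivity) hr _
    _ ≤ |(cyclotomic n ℝ).eval a * (cyclotomic n ℝ).eval (-a⁻¹)| := by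
        rw [← prod_pow]
        exact pow_totient_mul_prod_le_abs_cyclotomic (by linarith) hn

lemma goldenRatio_le_of_one_le_sub_inv {a : ℝ} (ha : 0 < a) (h : 1 ≤ a - a⁻¹) :
    goldenRatio ≤ a := by
  have : a + 1 ≤ a ^ 2 := by
    have := mul_le_mul_of_nonneg_left h ha.le
    rw [mul_sub, mul_inv_cancel₀ ha.ne', ← sq, mul_one] at this
    linarith
  nlinarith [goldenRatio_sq, goldenConj_neg, goldenRatio_add_goldenConj]

section QuadraticField

variable {K : Type*} [Field K] [NumberField K]

lemma exists_ringHom_norm_eq_mul (hdeg : Module.finrank ℚ K = 2) (ψ : K →+* ℂ) :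
    ∃ τ : K →+* ℂ, ∀ x : 𝓞 K, (Algebra.norm ℤ x : ℂ) = ψ x * τ x := by
  classical
  have hcard : Fintype.card (K →ₐ[ℚ] ℂ) = 2 := by rw [AlgHom.card]; exact hdeg
  obtain ⟨τ, hτ⟩ := Fintype.exists_ne_of_one_lt_card (by omega) ψ.toRatAlgHom
  have huniv : (univ : Finset (K →ₐ[ℚ] ℂ)) = {ψ.toRatAlgHom, τ} :=
    (eq_univ_of_card _ (by rw [card_pair hτ.symm, hcard])).symm
  refine ⟨τ, fun x ↦ ?_⟩
  have h := Algebra.norm_eq_prod_embeddings ℚ ℂ (x : K)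
  rw [huniv, prod_pair hτ.symm] at h
  rwa [← Algebra.coe_norm_int, eq_ratCast, Rat.cast_intCast] at h

lemma norm_aeval_eq_aeval_mul_aeval (hdeg : Module.finrank ℚ K = 2) (σ : K →+* ℝ)
    (u : (𝓞 K)ˣ) (hnorm : Algebra.norm ℤ (u : 𝓞 K) = -1) (P : ℤ[X]) :
    (Algebra.norm ℤ (aeval (u : 𝓞 K) P) : ℝ)
      = aeval (σ (u : 𝓞 K)) P * aeval (-(σ (u : 𝓞 K))⁻¹) P := by
  obtain ⟨τ, hτ⟩ := exists_ringHom_norm_eq_mul hdeg (Complex.ofRealHom.comp σ)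
  have hτu : τ (u : 𝓞 K) = ((-(σ (u : 𝓞 K))⁻¹ : ℝ) : ℂ) := by
    have h := hτ u
    rw [hnorm, Int.cast_neg, Int.cast_one, RingHom.comp_apply, Complex.ofRealHom_eq_coe] at h
    have : (σ (u : 𝓞 K) : ℂ) ≠ 0 := by rintro h0; simp [h0] at h
    push_cast
    field_simp
    linear_combination -h
  have haeval (ρ : K →+* ℂ) (x : 𝓞 K) : ρ (aeval x P : 𝓞 K) = aeval (ρ x) P :=
    (aeval_algHom_apply (ρ.comp (algebraMap (𝓞 K) K)).toIntAlgHom x P).symm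
  have hreal (y : ℝ) : ((aeval y P : ℝ) : ℂ) = aeval (y : ℂ) P :=
    (aeval_algHom_apply Complex.ofRealHom.toIntAlgHom y P).symm
  apply Complex.ofReal_injective
  push_cast
  rw [hτ, haeval, haeval, hτu, hreal, hreal]
  rfl

lemma goldenRatio_le_of_norm_eq_neg_one (hdeg : Module.finrank ℚ K = 2) (σ : K →+* ℝ)
    (u : (𝓞 K)ˣ) (hu : 1 < σ (u : 𝓞 K)) (hnorm : Algebra.norm ℤ (u : 𝓞 K) = -1) :
    goldenRatio ≤ σ (u : 𝓞 K) := by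
  have h := norm_aeval_eq_aeval_mul_aeval hdeg σ u hnorm (X - 1)
  set a := σ (u : 𝓞 K)
  simp only [map_sub, aeval_X, map_one] at h
  rw [show (a - 1) * (-a⁻¹ - 1) = -(a - a⁻¹) by field_simp; ring] at h
  have hpos : 0 < a - a⁻¹ := by linarith [inv_lt_one_of_one_lt₀ hu]
  have hint : Algebra.norm ℤ ((u : 𝓞 K) - 1) ≤ -1 := by
    have : (Algebra.norm ℤ ((u : 𝓞 K) - 1) : ℝ) < 0 := by linarith
    have := Int.cast_lt_zero.mp this
    omega
  have : (Algebra.norm ℤ ((u : 𝓞 K) - 1) : ℝ) ≤ -1 := by exact_mod_cast hint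
  exact goldenRatio_le_of_one_le_sub_inv (by linarith) (by linarith)

end QuadraticField

/-- For a real quadratic unit `u > 1` of norm `-1`, for every `n ≥ 1`,
`|N(Φ_n(u))| > u^{φ(n)} · e^{-5.03933}`. -/
theorem norm_cyclotomic_lower_bound_neg_one (K : Type*) [Field K] [NumberField K]
    (hdeg : Module.finrank ℚ K = 2) (σ : K →+* ℝ)
    (u : (RingOfIntegers K)ˣ) (hu : 1 < σ (((u : RingOfIntegers K) : K)))
    (hnorm : Algebra.norm ℤ ((u : RingOfIntegers K)) = -1)
    (n : ℕ) (hn : 1 ≤ n) :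
    ((|Algebra.norm ℤ (aeval (u : RingOfIntegers K) (cyclotomic n ℤ))| : ℤ) : ℝ) >
      (σ (((u : RingOfIntegers K) : K))) ^ n.totient * Real.exp (-5.03933) := by
  have haeval (x : ℝ) : aeval x (cyclotomic n ℤ) = (cyclotomic n ℝ).eval x := by
    rw [aeval_def, eval₂_eq_eval_map, map_cyclotomic]
  rw [Int.cast_abs, norm_aeval_eq_aeval_mul_aeval hdeg σ u hnorm, haeval, haeval]
  exact pow_totient_mul_exp_lt_abs_cyclotomic
    (goldenRatio_le_of_norm_eq_neg_one hdeg σ u hu hnorm) hn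
end

section
/- For all n > 6 with log n > 1, if u ≥ (3+√5)/2 satisfies u^{φ(n)} < e^{1.55724} · n², then log n - 2 log log n - 4/(log n) < 2.02819 - log log u. -/
/-!
Taking logarithms, the hypothesis reads `φ(n) log u < 1.55724 + 2 log n`, and `log u ≥ 0.9`.
Since `n ≤ 2 φ(n)²` (by multiplicativity, as `p ^ k ≤ φ(p ^ k)²` for odd primes `p`), `n` would be
bounded by a quadratic in `log n`, which is impossible once `log n > 6.5`. For `1 < log n ≤ 6.5`,
`log log u < log (1.55724 + 2 log n) - log φ(n)` reduces the claim to an inequality in the single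
variable `L = log n`; it follows from `log x ≤ x - 1`, applied at `(1.55724 + 2L) / 2L` and
`6.5 / L`, and from `L + 6.55724 / L ≤ 7.55724` on `[1, 6.5]`.
-/

namespace Nat

theorem pow_le_totient_sq_of_ne_two {p : ℕ} (hp : p.Prime) (hp2 : p ≠ 2) (k : ℕ) :
    p ^ k ≤ φ (p ^ k) ^ 2 := by
  cases k with
  | zero => simp
  | succ k =>
    have hp3 : p + 1 ≤ (p - 1) ^ 2 := by
      have := hp.two_le
      obtain ⟨q, rfl⟩ : ∃ q, p = q + 3 := ⟨p - 3, by omega⟩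
      rw [show q + 3 - 1 = q + 2 by omega]; nlinarith
    rw [totient_prime_pow_succ hp, mul_pow, pow_succ, ← pow_mul]
    exact Nat.mul_le_mul (Nat.pow_le_pow_right hp.pos (by omega)) (by omega)

theorem two_pow_le_two_mul_totient_sq (k : ℕ) : 2 ^ k ≤ 2 * φ (2 ^ k) ^ 2 := by
  cases k with
  | zero => simp
  | succ k =>
    rw [totient_prime_pow_succ prime_two, pow_succ', Nat.add_one_sub_one, mul_one, ← pow_mul]
    exact Nat.mul_le_mul_left 2 (Nat.pow_le_pow_right two_pos (by omega))

theorem le_gcd_two_mul_totient_sq (n : ℕ) : n ≤ Nat.gcd 2 n * φ n ^ 2 := by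
  induction n using Nat.recOnPosPrimePosCoprime with
  | zero => simp
  | one => simp
  | prime_pow p k hp hk =>
    rcases eq_or_ne p 2 with rfl | hp2
    · rw [Nat.gcd_eq_left (dvd_pow_self 2 hk.ne')]
      exact two_pow_le_two_mul_totient_sq k
    · exact (pow_le_totient_sq_of_ne_two hp hp2 k).trans
        (Nat.le_mul_of_pos_left _ (Nat.gcd_pos_of_pos_left _ two_pos))
  | coprime a b _ _ hab iha ihb =>
    calc a * b ≤ (Nat.gcd 2 a * φ a ^ 2) * (Nat.gcd 2 b * φ b ^ 2) := Nat.mul_le_mul iha ihb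
      _ = Nat.gcd 2 (a * b) * φ (a * b) ^ 2 := by
        rw [Nat.Coprime.gcd_mul 2 hab, totient_mul hab]; ring

theorem le_two_mul_totient_sq (n : ℕ) : n ≤ 2 * φ n ^ 2 :=
  (le_gcd_two_mul_totient_sq n).trans (Nat.mul_le_mul_right _ (Nat.gcd_le_left n two_pos))

end Nat

namespace Real

theorem exp_div_pow {a b : ℕ} (hb : b ≠ 0) : exp (a / b) ^ b = exp 1 ^ a := by
  rw [← exp_nat_mul, mul_div_cancel₀ _ (Nat.cast_ne_zero.mpr hb), exp_one_pow]

theorem exp_div_le_of_exp_one_pow_le {x : ℝ} {a b : ℕ} (hb : b ≠ 0) (hx : 0 ≤ x)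
    (h : exp 1 ^ a ≤ x ^ b) : exp (a / b) ≤ x :=
  le_of_pow_le_pow_left₀ hb hx (by rwa [exp_div_pow hb])

theorem le_exp_div_of_pow_le_exp_one_pow {x : ℝ} {a b : ℕ} (hb : b ≠ 0)
    (h : x ^ b ≤ exp 1 ^ a) : x ≤ exp (a / b) :=
  le_of_pow_le_pow_left₀ hb (exp_pos _).le (by rwa [exp_div_pow hb])

theorem exp_nine_tenths_le : exp 0.9 ≤ 2.5 := by
  have := exp_div_le_of_exp_one_pow_le (a := 9) (b := 10) (x := 2.5) (by norm_num) (by norm_num)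
    ((pow_le_pow_left₀ (exp_pos 1).le exp_one_lt_d9.le 9).trans (by norm_num))
  norm_num at this ⊢; exact this

theorem exp_eight_fifths_le : exp 1.6 ≤ 169 / 32 := by
  have := exp_div_le_of_exp_one_pow_le (a := 8) (b := 5) (x := 169 / 32) (by norm_num)
    (by norm_num) ((pow_le_pow_left₀ (exp_pos 1).le exp_one_lt_d9.le 8).trans (by norm_num))
  norm_num at this ⊢; exact this

theorem le_exp_thirteen_halves : 665 ≤ exp 6.5 := by
  have := le_exp_div_of_pow_le_exp_one_pow (a := 13) (b := 2) (x := 665) (by norm_num)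
    ((by norm_num : (665 : ℝ) ^ 2 ≤ 2.7182818283 ^ 13).trans
      (pow_le_pow_left₀ (by norm_num) exp_one_gt_d9.le 13))
  norm_num at this ⊢; exact this

end Real

open Real

theorem two_mul_sq_div_lt_exp {L : ℝ} (hL : 6.5 < L) :
    2 * ((1.55724 + 2 * L) / 0.9) ^ 2 < exp L := by
  obtain ⟨t, rfl⟩ : ∃ t, L = 6.5 + t := ⟨L - 6.5, by ring⟩
  have ht : 0 < t := by linarith
  have hsq : (1 + t / 2) ^ 2 ≤ exp t := by
    rw [show t = t / 2 + t / 2 by ring, exp_add, ← sq]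
    exact pow_le_pow_left₀ (by positivity) (by linarith [add_one_le_exp (t / 2)]) 2
  have hexp : 665 * (1 + t / 2) ^ 2 ≤ exp (6.5 + t) := by
    rw [exp_add]
    exact mul_le_mul le_exp_thirteen_halves hsq (by positivity) (exp_pos _).le
  have hpoly : 2 * ((1.55724 + 2 * (6.5 + t)) / 0.9) ^ 2 < 665 * (1 + t / 2) ^ 2 := by
    rw [← sub_pos]; ring_nf; positivity
  linarith

theorem log_add_half_le_of_mem_Icc {L : ℝ} (h1 : 1 ≤ L) (h2 : L ≤ 6.5) :
    log (1.55724 + 2 * L) + (L + log 2) / 2 ≤ 2.02819 + 2 * log L + 4 / L := by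
  have hL : 0 < L := by linarith
  have hK : log (1.55724 + 2 * L) ≤ log 2 + log L + 0.77862 / L := by
    have := log_le_sub_one_of_pos (x := (1.55724 + 2 * L) / (2 * L)) (by positivity)
    rw [log_div (by positivity) (by positivity), log_mul two_ne_zero hL.ne'] at this
    have e : (1.55724 + 2 * L) / (2 * L) - 1 = 0.77862 / L := by field_simp; ring
    linarith
  have htangent : log 6.5 + 1 - 6.5 / L ≤ log L := by
    have := log_le_sub_one_of_pos (x := 6.5 / L) (by positivity)
    rw [log_div (by norm_num) hL.ne'] at this
    linarith
  have hchord : L + 6.55724 / L ≤ 7.55724 := by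
    have : 6.55724 / L ≤ 7.55724 - L := by rw [div_le_iff₀ hL]; nlinarith
    linarith
  have hnum : 1.6 ≤ 2 * log 6.5 - 3 * log 2 := by
    have := log_le_log (exp_pos _) exp_eight_fifths_le
    rwa [log_exp, show (169 / 32 : ℝ) = 6.5 ^ 2 / 2 ^ 3 by norm_num,
      log_div (by norm_num) (by norm_num), log_pow, log_pow] at this
  have h : 0.77862 / L - 4 / L + 6.5 / L = 6.55724 / L / 2 := by ring
  linarith

theorem key_inequality_norm_one_general (n : ℕ) (hlog : 1 < Real.log n)
    (u : ℝ) (hu : (3 + Real.sqrt 5) / 2 ≤ u)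
    (h : u ^ n.totient < Real.exp 1.55724 * (n : ℝ) ^ 2) :
    Real.log n - 2 * Real.log (Real.log n) - 4 / Real.log n <
      2.02819 - Real.log (Real.log u) := by
  have hn : (0 : ℝ) < n := Nat.cast_pos.mpr (Nat.pos_of_ne_zero (by rintro rfl; norm_num at hlog))
  have hφ : (0 : ℝ) < n.totient := Nat.cast_pos.mpr (Nat.totient_pos.mpr (Nat.cast_pos.mp hn))
  have hφn : (n : ℝ) ≤ 2 * (n.totient : ℝ) ^ 2 := by exact_mod_cast Nat.le_two_mul_totient_sq n
  set L := log n
  have hu₀ : 2.5 ≤ u := by linarith [le_sqrt_of_sq_le (by norm_num : (2 : ℝ) ^ 2 ≤ 5)]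
  have hℓ : 0.9 ≤ log u := by
    rw [le_log_iff_exp_le (by linarith)]
    linarith [exp_nine_tenths_le]
  have hmain : n.totient * log u < 1.55724 + 2 * L := by
    have := log_lt_log (pow_pos (by linarith) _) h
    rwa [log_pow, log_mul (exp_ne_zero _) (by positivity), log_exp,
      log_pow, Nat.cast_two] at this
  have hL : L ≤ 6.5 := by
    by_contra! hL
    have hφK : (n.totient : ℝ) < (1.55724 + 2 * L) / 0.9 := by
      rw [lt_div_iff₀ (by norm_num)]; nlinarith
    have := two_mul_sq_div_lt_exp hL
    rw [exp_log hn] at this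
    nlinarith
  have hlogℓ : log (log u) < log (1.55724 + 2 * L) - log n.totient := by
    rw [← log_div (by linarith) hφ.ne']
    exact log_lt_log (by linarith) (by rw [lt_div_iff₀ hφ]; linarith)
  have hlogφ : L ≤ log 2 + 2 * log n.totient := by
    have := log_le_log hn hφn
    rwa [log_mul two_ne_zero (by positivity), log_pow, Nat.cast_two] at this
  linarith [log_add_half_le_of_mem_Icc hlog.le hL]

/-- For all `n > 6` (with `log n > 1`), if `u ≥ (3+√5)/2` satisfies
`u^{φ(n)} < e^{1.55724} · n²`, then `log n - 2 log log n - 4/log n < 2.02819 - log log u`. -/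
theorem key_inequality_norm_one (n : ℕ) (hn : 6 < n) (hlog : 1 < Real.log n)
    (u : ℝ) (hu : (3 + Real.sqrt 5) / 2 ≤ u)
    (h : u ^ n.totient < Real.exp 1.55724 * (n : ℝ) ^ 2) :
    Real.log n - 2 * Real.log (Real.log n) - 4 / Real.log n <
      2.02819 - Real.log (Real.log u) :=
  key_inequality_norm_one_general n hlog u hu h
end

section
/- The only units u of real quadratic fields with norm N(u) = 1 and 1 < u ≤ 6 are u = (3+√5)/2, u = 2+√3, u = 3+2√2, and u = (5+√21)/2. -/
/-- A unit `u` of a real quadratic field with norm `1` is an irrational real root of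
`x² - t·x + 1` for some integer `t` (its trace). The only such units with `1 < u ≤ 6` are
`(3+√5)/2`, `2+√3`, `3+2√2` and `(5+√21)/2`. -/
theorem norm_one_units_le_six (u : ℝ) (t : ℤ)
    (hmin : u ^ 2 - (t : ℝ) * u + 1 = 0) (hirr : Irrational u)
    (h1 : 1 < u) (h6 : u ≤ 6) :
    u = (3 + Real.sqrt 5) / 2 ∨ u = 2 + Real.sqrt 3 ∨
      u = 3 + 2 * Real.sqrt 2 ∨ u = (5 + Real.sqrt 21) / 2 := by
  have hu0 : (0:ℝ) < u := by linarith
  have ht2 : (2:ℝ) < t := by nlinarith [sq_nonneg (u - 1)]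
  have ht7 : (t:ℝ) < 7 := by nlinarith
  have ht2' : 3 ≤ t := by have : (2:ℤ) < t := by exact_mod_cast ht2
                          omega
  have ht7' : t ≤ 6 := by have : (t:ℤ) < 7 := by exact_mod_cast ht7
                          omega
  have hpos : 0 < 2 * u - t := by nlinarith [sq_nonneg (u - 1)]
  have hsq : ((t:ℝ) ^ 2 - 4) = (2 * u - t) ^ 2 := by nlinarith
  have hsqrt : Real.sqrt ((t:ℝ) ^ 2 - 4) = 2 * u - t := by
    rw [hsq]; exact Real.sqrt_sq hpos.le
  interval_cases t
  · left
    have h5 : Real.sqrt 5 = 2 * u - 3 := by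
      have := hsqrt; push_cast at this; norm_num at this; linarith [this]
    rw [h5]; ring
  · right; left
    have h12 : Real.sqrt 12 = 2 * u - 4 := by
      have := hsqrt; push_cast at this; norm_num at this; linarith [this]
    have h12' : Real.sqrt 12 = 2 * Real.sqrt 3 := by
      rw [show (12:ℝ) = 2 ^ 2 * 3 by norm_num, Real.sqrt_mul (by positivity),
        Real.sqrt_sq (by norm_num)]
    linarith [h12, h12']
  · right; right; right
    have h21 : Real.sqrt 21 = 2 * u - 5 := by
      have := hsqrt; push_cast at this; norm_num at this; linarith [this]
    rw [h21]; ring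
  · right; right; left
    have h32 : Real.sqrt 32 = 2 * u - 6 := by
      have := hsqrt; push_cast at this; norm_num at this; linarith [this]
    have h32' : Real.sqrt 32 = 4 * Real.sqrt 2 := by
      rw [show (32:ℝ) = 4 ^ 2 * 2 by norm_num, Real.sqrt_mul (by positivity),
        Real.sqrt_sq (by norm_num)]
    linarith [h32, h32']
end

section
/- The only units u of real quadratic fields with norm N(u) = -1 and 1 < u ≤ 13 are 1+√2, (1+√5)/2, 2+√5, (11+5√5)/2, 3+√10, (3+√13)/2, 4+√17, 5+√26, (5+√29)/2, 6+√37, (7+√53)/2, and (9+√85)/2. -/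
/-- A unit `u` of a real quadratic field with norm `-1` is an irrational real root of
`x² - t·x - 1` for some integer `t` (its trace). The only such units with `1 < u ≤ 13` are
`1+√2`, `(1+√5)/2`, `2+√5`, `(11+5√5)/2`, `3+√10`, `(3+√13)/2`, `4+√17`, `5+√26`,
`(5+√29)/2`, `6+√37`, `(7+√53)/2`, `(9+√85)/2`. -/
theorem norm_neg_one_units_le_thirteen (u : ℝ) (t : ℤ)
    (hmin : u ^ 2 - (t : ℝ) * u - 1 = 0) (hirr : Irrational u)
    (h1 : 1 < u) (h13 : u ≤ 13) :
    u = 1 + Real.sqrt 2 ∨ u = (1 + Real.sqrt 5) / 2 ∨ u = 2 + Real.sqrt 5 ∨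
      u = (11 + 5 * Real.sqrt 5) / 2 ∨ u = 3 + Real.sqrt 10 ∨
      u = (3 + Real.sqrt 13) / 2 ∨ u = 4 + Real.sqrt 17 ∨ u = 5 + Real.sqrt 26 ∨
      u = (5 + Real.sqrt 29) / 2 ∨ u = 6 + Real.sqrt 37 ∨
      u = (7 + Real.sqrt 53) / 2 ∨ u = (9 + Real.sqrt 85) / 2 := by
  have hu0 : (0:ℝ) < u := by linarith
  have hinv : (0:ℝ) < 1 / u := by positivity
  have ht : (t : ℝ) = u - 1 / u := by
    field_simp
    nlinarith [hmin]
  have hinv1 : 1 / u < 1 := by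
    rw [div_lt_one hu0]; exact h1
  have hpos : 0 < 2 * u - (t : ℝ) := by rw [ht]; linarith
  have hsq : (2 * u - (t : ℝ)) ^ 2 = (t : ℝ) ^ 2 + 4 := by nlinarith [hmin]
  have hform : 2 * u - (t : ℝ) = Real.sqrt ((t : ℝ) ^ 2 + 4) := by
    rw [← hsq, Real.sqrt_sq hpos.le]
  have ht1 : 1 ≤ t := by
    have : (0 : ℝ) < (t : ℝ) := by rw [ht]; linarith
    exact_mod_cast this
  have ht12 : t ≤ 12 := by
    have : (t : ℝ) < 13 := by rw [ht]; linarith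
    have : t < 13 := by exact_mod_cast this
    omega
  interval_cases t <;> push_cast at hform <;> norm_num at hform
  · right; left
    linarith [hform]
  · left
    have h8 : Real.sqrt 8 = 2 * Real.sqrt 2 := by
      rw [show (8:ℝ) = (2 * Real.sqrt 2)^2 by
        rw [mul_pow, Real.sq_sqrt]; norm_num; norm_num,
        Real.sqrt_sq (by positivity)]
    rw [h8] at hform
    linarith [hform]
  · right; right; right; right; right; left
    linarith [hform]
  · right; right; left
    have h20 : Real.sqrt 20 = 2 * Real.sqrt 5 := by
      rw [show (20:ℝ) = (2 * Real.sqrt 5)^2 by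
        rw [mul_pow, Real.sq_sqrt]; norm_num; norm_num,
        Real.sqrt_sq (by positivity)]
    rw [h20] at hform
    linarith [hform]
  · right; right; right; right; right; right; right; right; left
    linarith [hform]
  · right; right; right; right; left
    have h40 : Real.sqrt 40 = 2 * Real.sqrt 10 := by
      rw [show (40:ℝ) = (2 * Real.sqrt 10)^2 by
        rw [mul_pow, Real.sq_sqrt]; norm_num; norm_num,
        Real.sqrt_sq (by positivity)]
    rw [h40] at hform
    linarith [hform]
  · right; right; right; right; right; right; right; right; right; right; left
    linarith [hform]
  · right; right; right; right; right; right; left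
    have h68 : Real.sqrt 68 = 2 * Real.sqrt 17 := by
      rw [show (68:ℝ) = (2 * Real.sqrt 17)^2 by
        rw [mul_pow, Real.sq_sqrt]; norm_num; norm_num,
        Real.sqrt_sq (by positivity)]
    rw [h68] at hform
    linarith [hform]
  · right; right; right; right; right; right; right; right; right; right; right
    linarith [hform]
  · right; right; right; right; right; right; right; left
    have h104 : Real.sqrt 104 = 2 * Real.sqrt 26 := by
      rw [show (104:ℝ) = (2 * Real.sqrt 26)^2 by
        rw [mul_pow, Real.sq_sqrt]; norm_num; norm_num,
        Real.sqrt_sq (by positivity)]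
    rw [h104] at hform
    linarith [hform]
  · right; right; right; left
    have h125 : Real.sqrt 125 = 5 * Real.sqrt 5 := by
      rw [show (125:ℝ) = (5 * Real.sqrt 5)^2 by
        rw [mul_pow, Real.sq_sqrt]; norm_num; norm_num,
        Real.sqrt_sq (by positivity)]
    rw [h125] at hform
    linarith [hform]
  · right; right; right; right; right; right; right; right; right; left
    have h148 : Real.sqrt 148 = 2 * Real.sqrt 37 := by
      rw [show (148:ℝ) = (2 * Real.sqrt 37)^2 by
        rw [mul_pow, Real.sq_sqrt]; norm_num; norm_num,
        Real.sqrt_sq (by positivity)]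
    rw [h148] at hform
    linarith [hform]
end

section
/- Every unit u > 1 of a real quadratic field with norm 1 satisfies u ≥ (3+√5)/2. -/
/-! The trace `t = u + u⁻¹` of a unit `u > 1` exceeds `2`, so the integer `t` is at least `3`.
Then `u² - 3u + 1 = (t - 3) u ≥ 0`, which puts `u > 1` beyond the larger root `(3 + √5)/2`
of `x² - 3x + 1`. -/

lemma two_mul_lt_sq_add_one {R : Type*} [CommRing R] [LinearOrder R] [IsStrictOrderedRing R]
    {x : R} (hx : x ≠ 1) : 2 * x < x ^ 2 + 1 := by
  have : 0 < (x - 1) ^ 2 := pow_two_pos_of_ne_zero (sub_ne_zero.mpr hx)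
  linarith [show (x - 1) ^ 2 = x ^ 2 + 1 - 2 * x by ring]

lemma three_add_sqrt_five_div_two_le {u : ℝ} (hu : 1 < u) (h : 3 * u ≤ u ^ 2 + 1) :
    (3 + √5) / 2 ≤ u := by
  have h5 : √5 ^ 2 = 5 := Real.sq_sqrt (by norm_num)
  have hsmall : 0 < u - (3 - √5) / 2 := by nlinarith [Real.sqrt_nonneg 5]
  have hfactor : (u - (3 + √5) / 2) * (u - (3 - √5) / 2) = u ^ 2 - 3 * u + 1 := by
    linear_combination (-1 / 4 : ℝ) * h5
  exact sub_nonneg.mp (nonneg_of_mul_nonneg_left (by linarith) hsmall)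

theorem norm_one_unit_lower_bound_general (u : ℝ) (t : ℤ)
    (hmin : u ^ 2 - (t : ℝ) * u + 1 = 0) (h1 : 1 < u) :
    (3 + Real.sqrt 5) / 2 ≤ u := by
  have htu : (t : ℝ) * u = u ^ 2 + 1 := by linarith
  have ht2 : (2 : ℝ) < t :=
    lt_of_mul_lt_mul_right (htu ▸ two_mul_lt_sq_add_one h1.ne') (by linarith)
  have ht3 : (3 : ℝ) ≤ t := by exact_mod_cast (show (2 : ℤ) < t by exact_mod_cast ht2)
  refine three_add_sqrt_five_div_two_le h1 ?_
  calc 3 * u ≤ t * u := by gcongr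
    _ = u ^ 2 + 1 := htu

/-- Every unit `u > 1` of a real quadratic field with norm `1` (an irrational real root of
`x² - t·x + 1`, `t ∈ ℤ`) satisfies `u ≥ (3+√5)/2`. -/
theorem norm_one_unit_lower_bound (u : ℝ) (t : ℤ)
    (hmin : u ^ 2 - (t : ℝ) * u + 1 = 0) (hirr : Irrational u) (h1 : 1 < u) :
    (3 + Real.sqrt 5) / 2 ≤ u :=
  norm_one_unit_lower_bound_general u t hmin h1
end

section
/- Every unit u > 1 of a real quadratic field with norm -1 satisfies u ≥ (1+√5)/2. -/
open Real goldenRatio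

/-- Since `φ` and `ψ < 0` are the roots of `x² - x - 1`, the factorisation
`u² - u - 1 = (u - φ)(u - ψ)` forces `u ≥ φ`. -/
theorem goldenRatio_le_of_add_one_le_sq {u : ℝ} (hu : 0 ≤ u) (h : u + 1 ≤ u ^ 2) : φ ≤ u := by
  by_contra! hlt
  have hfactor : u ^ 2 - u - 1 = (u - φ) * (u - ψ) := by
    linear_combination (u - 1) * goldenRatio_add_goldenConj - goldenRatio_mul_goldenConj
  nlinarith [goldenConj_neg]

theorem one_le_of_sq_sub_mul_sub_one_eq_zero {u : ℝ} {t : ℤ} (h1 : 1 < u)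
    (hroot : u ^ 2 - t * u - 1 = 0) : 1 ≤ t := by
  -- `t = u - u⁻¹ > 0`, and `t` is an integer.
  have ht : (0 : ℝ) < t := by nlinarith
  exact_mod_cast Int.cast_pos.mp ht

theorem norm_neg_one_unit_lower_bound_general (u : ℝ) (t : ℤ)
    (hmin : u ^ 2 - (t : ℝ) * u - 1 = 0) (h1 : 1 < u) :
    (1 + Real.sqrt 5) / 2 ≤ u := by
  have ht : (1 : ℝ) ≤ t := by exact_mod_cast one_le_of_sq_sub_mul_sub_one_eq_zero h1 hmin
  exact goldenRatio_le_of_add_one_le_sq (by linarith) (by nlinarith)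

/-- Every unit `u > 1` of a real quadratic field with norm `-1` (an irrational real root of
`x² - t·x - 1`, `t ∈ ℤ`) satisfies `u ≥ (1+√5)/2`. -/
theorem norm_neg_one_unit_lower_bound (u : ℝ) (t : ℤ)
    (hmin : u ^ 2 - (t : ℝ) * u - 1 = 0) (hirr : Irrational u) (h1 : 1 < u) :
    (1 + Real.sqrt 5) / 2 ≤ u :=
  norm_neg_one_unit_lower_bound_general u t hmin h1
end

section
/- Let u = (3+√5)/2 and Δ_n = N_{ℚ(√5)/ℚ}(u^n - 1). Then among n ∈ {2,...,12}, the terms without a primitive prime divisor are exactly Δ_6 = -320, Δ_{10} = -15125, and Δ_{12} = -103680. -/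
open NumberField

/-!
Since `u² = 3u - 1`, induction gives `u ^ n = F₂ₙ u + (F₂ₙ₊₁ - 2 F₂ₙ)` in terms of Fibonacci
numbers, and in a quadratic field with basis `1, u` the norm is the binary quadratic form
`N(a + b u) = a² + 3ab + b²`. As `N(u) = 1`, also `N(u ^ n) = 1`, and together these give
`Δ_n = N(u ^ n - 1) = 2 + F₂ₙ - 2 F₂ₙ₊₁ = 2 - L₂ₙ`. The values `Δ_1, …, Δ_12` are
`-1, -5, -16, -45, -121, -320, -841, -2205, -5776, -15125, -39601, -103680`; every prime factor
of `Δ_6`, `Δ_10`, `Δ_12` already divides an earlier term, while each of the others has a prime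
factor (`5, 2, 3, 11, 29, 7, 19, 199`) that divides no earlier term.
-/

section QuadraticNorm

variable {F L : Type*} [Field F] [Field L] [Algebra F L]

theorem linearIndependent_one_of_notMem_range {x : L} (hx : x ∉ Set.range (algebraMap F L)) :
    LinearIndependent F ![1, x] := by
  rw [LinearIndependent.pair_iff]
  intro s t hst
  rcases eq_or_ne t 0 with rfl | ht
  · simpa using hst
  · refine absurd ⟨-s / t, ?_⟩ hx
    rw [Algebra.smul_def, Algebra.smul_def, mul_one] at hst
    rw [map_div₀, map_neg, div_eq_iff (by simpa using ht)]
    linear_combination -hst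

theorem Algebra.norm_algebraMap_add_mul_of_sq_eq (hL : Module.finrank F L = 2) {x : L}
    (hx : x ∉ Set.range (algebraMap F L)) {s p : F}
    (hrel : x ^ 2 = algebraMap F L s * x - algebraMap F L p) (u v : F) :
    Algebra.norm F (algebraMap F L u + algebraMap F L v * x) = u ^ 2 + s * u * v + p * v ^ 2 := by
  set b := basisOfLinearIndependentOfCardEqFinrank (linearIndependent_one_of_notMem_range hx)
    (by simp [hL])
  have hb : ⇑b = ![1, x] := coe_basisOfLinearIndependentOfCardEqFinrank _ _
  have hrepr (c d : F) (i : Fin 2) : b.repr (c • b 0 + d • b 1) i = ![c, d] i := by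
    fin_cases i <;> simp
  set y := algebraMap F L u + algebraMap F L v * x
  have hy0 : y * b 0 = u • b 0 + v • b 1 := by
    simp [hb, y, Algebra.smul_def]
  have hy1 : y * b 1 = (-(p * v)) • b 0 + (u + s * v) • b 1 := by
    simp only [hb, y, Algebra.smul_def, Matrix.cons_val_zero, Matrix.cons_val_one,
      Matrix.cons_val_fin_one, map_neg, map_mul, map_add]
    linear_combination algebraMap F L v * hrel
  rw [Algebra.norm_eq_matrix_det b, Matrix.det_fin_two]
  simp only [Algebra.leftMulMatrix_eq_repr_mul, hy0, hy1, hrepr, Matrix.cons_val_zero,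
    Matrix.cons_val_one, Matrix.cons_val_fin_one]
  ring

end QuadraticNorm

theorem notMem_range_algebraMap_of_irrational {K : Type*} [Field K] [CharZero K] (σ : K →+* ℝ)
    {x : K} (hx : Irrational (σ x)) : x ∉ Set.range (algebraMap ℚ K) := by
  rintro ⟨r, rfl⟩
  exact hx ⟨r, by simp⟩

theorem pow_eq_fib_mul_add {R : Type*} [CommRing R] {x : R} (hx : x ^ 2 = 3 * x - 1) (n : ℕ) :
    x ^ n = Nat.fib (2 * n) * x + (Nat.fib (2 * n + 1) - 2 * Nat.fib (2 * n)) := by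
  induction n with
  | zero => simp
  | succ n ih =>
    have h₁ := Nat.fib_add_two (n := 2 * n)
    have h₂ := Nat.fib_add_two (n := 2 * n + 1)
    rw [pow_succ, ih, show 2 * (n + 1) = 2 * n + 2 by ring, h₁,
      show 2 * n + 2 + 1 = 2 * n + 3 by ring, h₂, h₁]
    push_cast
    linear_combination (Nat.fib (2 * n) : R) * hx

def lehmerPierceSeq (n : ℕ) : ℤ := 2 + Nat.fib (2 * n) - 2 * Nat.fib (2 * n + 1)

theorem norm_pow_sub_one_eq_lehmerPierceSeq {K : Type*} [Field K] [NumberField K]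
    (hK : Module.finrank ℚ K = 2) {α : 𝓞 K} (hα : (α : K) ∉ Set.range (algebraMap ℚ K))
    (hrel : (α : K) ^ 2 = 3 * α - 1) (n : ℕ) :
    Algebra.norm ℤ (α ^ n - 1) = lehmerPierceSeq n := by
  have hnorm := Algebra.norm_algebraMap_add_mul_of_sq_eq hK hα (s := 3) (p := 1)
    (by rw [map_ofNat, map_one, hrel])
  set a : ℚ := (Nat.fib (2 * n + 1) : ℚ) - 2 * Nat.fib (2 * n)
  set b : ℚ := (Nat.fib (2 * n) : ℚ)
  have hpow : (α : K) ^ n = algebraMap ℚ K a + algebraMap ℚ K b * α := by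
    rw [pow_eq_fib_mul_add hrel n]
    simp [a, b]
    ring
  have hunit : a ^ 2 + 3 * a * b + 1 * b ^ 2 = 1 := by
    have hα1 : Algebra.norm ℚ (α : K) = 1 := by simpa using hnorm 0 1
    rw [← hnorm, ← hpow, map_pow, hα1, one_pow]
  have hsub : ((α ^ n - 1 : 𝓞 K) : K) = algebraMap ℚ K (a - 1) + algebraMap ℚ K b * α := by
    rw [map_sub, map_one, sub_add_eq_add_sub, ← hpow]
    push_cast
    rfl
  have hΔ := Algebra.coe_norm_int (α ^ n - 1)
  rw [hsub, hnorm] at hΔ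
  have hseq : (lehmerPierceSeq n : ℚ) = (a - 1) ^ 2 + 3 * (a - 1) * b + 1 * b ^ 2 := by
    simp only [lehmerPierceSeq, a, b]
    push_cast
    linear_combination -hunit
  exact_mod_cast hΔ.trans hseq.symm

def IsPrimitivePrimeDivisor (Δ : ℕ → ℤ) (n p : ℕ) : Prop :=
  p.Prime ∧ (p : ℤ) ∣ Δ n ∧ ∀ m : ℕ, 0 < m → m < n → Δ m ≠ 0 → ¬ (p : ℤ) ∣ Δ m

theorem exists_isPrimitivePrimeDivisor_iff {Δ : ℕ → ℤ} {n : ℕ} (hn : Δ n ≠ 0) :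
    (∃ p, IsPrimitivePrimeDivisor Δ n p) ↔
      ∃ p ∈ (Δ n).natAbs.primeFactors, ∀ m ∈ Finset.Ioo 0 n, Δ m ≠ 0 → ¬ (p : ℤ) ∣ Δ m := by
  simp [IsPrimitivePrimeDivisor, Int.natCast_dvd, hn, and_assoc]

theorem lehmerPierceSeq_not_exists_isPrimitivePrimeDivisor_iff {n : ℕ} (hn₂ : 2 ≤ n)
    (hn₁₂ : n ≤ 12) :
    (¬ ∃ p, IsPrimitivePrimeDivisor lehmerPierceSeq n p) ↔ n = 6 ∨ n = 10 ∨ n = 12 := by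
  interval_cases n <;>
  · rw [exists_isPrimitivePrimeDivisor_iff (by decide)]
    conv in Int.natAbs _ => norm_num [lehmerPierceSeq]
    simp only [← Nat.toFinset_factors, Nat.primeFactorsList_ofNat]
    decide

/-- For `u = (3+√5)/2`, a unit of the ring of integers of `ℚ(√5)`, and
`Δ_n = N_{ℚ(√5)/ℚ}(u^n - 1)`: among `n ∈ {2,…,12}` the terms without a primitive prime
divisor are exactly `Δ_6 = -320`, `Δ_10 = -15125` and `Δ_12 = -103680`. -/
theorem lehmerPierce_three_add_sqrt_five_div_two (K : Type*) [Field K] [NumberField K]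
    (hdeg : Module.finrank ℚ K = 2) (σ : K →+* ℝ)
    (α : RingOfIntegers K) (hα : σ (α : K) = (3 + Real.sqrt 5) / 2)
    (Δ : ℕ → ℤ) (hΔ : ∀ n : ℕ, Δ n = Algebra.norm ℤ (α ^ n - 1)) :
    Δ 6 = -320 ∧ Δ 10 = -15125 ∧ Δ 12 = -103680 ∧
      ∀ n : ℕ, 2 ≤ n → n ≤ 12 →
        ((¬ ∃ p : ℕ, p.Prime ∧ (p : ℤ) ∣ Δ n ∧
            ∀ m : ℕ, 0 < m → m < n → Δ m ≠ 0 → ¬ (p : ℤ) ∣ Δ m) ↔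
          (n = 6 ∨ n = 10 ∨ n = 12)) := by
  have hrel : (α : K) ^ 2 = 3 * α - 1 := σ.injective <| by
    rw [map_pow, map_sub, map_mul, map_ofNat, map_one, hα]
    linear_combination Real.sq_sqrt (show (0 : ℝ) ≤ 5 by norm_num) / 4
  have hirr : Irrational ((3 + √5) / 2) :=
    ((show Irrational √5 by norm_num).ratCast_add 3).div_ratCast (by norm_num)
  have hαQ := notMem_range_algebraMap_of_irrational σ (hα ▸ hirr)
  obtain rfl : Δ = lehmerPierceSeq :=
    funext fun n ↦ (hΔ n).trans (norm_pow_sub_one_eq_lehmerPierceSeq hdeg hαQ hrel n)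
  exact ⟨by decide, by decide, by decide,
    fun n hn₂ hn₁₂ ↦ lehmerPierceSeq_not_exists_isPrimitivePrimeDivisor_iff hn₂ hn₁₂⟩
end

section
/- For the golden ratio unit u = (1+√5)/2 of norm -1, with Δ_n = N_{ℚ(√5)/ℚ}(u^n - 1), among the indices n ≤ 24 with n ≢ 2 (mod 4), the terms without a primitive prime divisor are exactly Δ_{12} = -320, Δ_{20} = -15125, and Δ_{24} = -103680. -/
/-!
Since `u² = u + 1`, we have `u^(n+1) = F_n + F_{n+1} u`, and in the basis `{1, u}` of `ℚ(√5)` the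
norm form is `c² + cd - d²`; hence `Δ_{n+1} = (F_n - 1)² + (F_n - 1) F_{n+1} - F_{n+1}²`. The rest
is a finite computation: every other `Δ_n` in range has an explicit primitive prime divisor, while
`Δ_12 = -2⁶·5`, `Δ_20 = -5³·11²` and `Δ_24 = -2⁸·3⁴·5` are built from `2 ∣ Δ_3`, `3 ∣ Δ_8`,
`5 ∣ Δ_4` and `11 ∣ Δ_5`.
-/

open NumberField Module Finset

section QuadraticNorm

variable {F K : Type*} [Field F] [Field K] [Algebra F K] {θ : K}

theorem linearIndependent_one_of_notMem_range_s17 (hθ : θ ∉ Set.range (algebraMap F K)) :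
    LinearIndependent F ![1, θ] :=
  (LinearIndependent.pair_iff' one_ne_zero).mpr fun a ha =>
    hθ ⟨a, by rw [← ha, Algebra.algebraMap_eq_smul_one]⟩

theorem Algebra.norm_smul_one_add_smul (hK : finrank F K = 2)
    (hθ : θ ∉ Set.range (algebraMap F K)) {a b : F} (hsq : θ ^ 2 = a • θ + b • 1) (c d : F) :
    Algebra.norm F (c • 1 + d • θ) = c ^ 2 + a * c * d - b * d ^ 2 := by
  let B : Basis (Fin 2) F K := basisOfLinearIndependentOfCardEqFinrank
    (linearIndependent_one_of_notMem_range_s17 hθ) (by rw [hK, Fintype.card_fin])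
  have hB : ⇑B = ![1, θ] := coe_basisOfLinearIndependentOfCardEqFinrank _ _
  have hrepr (x y : F) : ⇑(B.repr (x • 1 + y • θ)) = ![x, y] := by
    have h := B.equivFun.apply_symm_apply ![x, y]
    rwa [Basis.equivFun_symm_apply, Fin.sum_univ_two, hB] at h
  have hmul : (c • 1 + d • θ) * θ = (d * b) • 1 + (c + d * a) • θ := by
    simp only [add_mul, smul_mul_assoc, one_mul, ← sq, hsq, smul_add, add_smul, mul_smul]
    abel
  rw [Algebra.norm_eq_matrix_det B, Matrix.det_fin_two]
  simp only [Algebra.leftMulMatrix_eq_repr_mul, hB, Matrix.cons_val_zero, Matrix.cons_val_one,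
    mul_one, hmul, hrepr]
  ring

end QuadraticNorm

theorem pow_succ_eq_fib_add_fib_mul {R : Type*} [CommRing R] {θ : R} (hsq : θ ^ 2 = θ + 1)
    (n : ℕ) : θ ^ (n + 1) = Nat.fib n + Nat.fib (n + 1) * θ := by
  induction n with
  | zero => simp
  | succ n ih =>
    rw [pow_succ, ih, Nat.fib_add_two, Nat.cast_add]
    linear_combination (Nat.fib (n + 1) : R) * hsq

section GoldenRatio

variable {K : Type*} [Field K] {θ : K}

theorem sq_eq_add_one_of_map_eq_goldenRatio (σ : K →+* ℝ) (hθ : σ θ = Real.goldenRatio) :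
    θ ^ 2 = θ + 1 :=
  σ.injective <| by rw [map_pow, map_add, map_one, hθ, Real.goldenRatio_sq]

theorem notMem_range_algebraMap_of_map_eq_goldenRatio [Algebra ℚ K] (σ : K →+* ℝ)
    (hθ : σ θ = Real.goldenRatio) : θ ∉ Set.range (algebraMap ℚ K) := by
  rintro ⟨q, rfl⟩
  exact Real.goldenRatio_irrational ⟨q, by rw [← hθ, eq_ratCast, map_ratCast]⟩

end GoldenRatio

def goldenDelta : ℕ → ℤ
  | 0 => 0
  | n + 1 =>
    ((Nat.fib n : ℤ) - 1) ^ 2 + ((Nat.fib n : ℤ) - 1) * Nat.fib (n + 1) - Nat.fib (n + 1) ^ 2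

theorem norm_pow_sub_one_eq_goldenDelta {K : Type*} [Field K] [NumberField K]
    (hK : finrank ℚ K = 2) {α : 𝓞 K} (hsq : (α : K) ^ 2 = α + 1)
    (hα : (α : K) ∉ Set.range (algebraMap ℚ K)) (n : ℕ) :
    Algebra.norm ℤ (α ^ n - 1) = goldenDelta n := by
  cases n with
  | zero => simp [goldenDelta]
  | succ n =>
    have hpow : ((α ^ (n + 1) - 1 : 𝓞 K) : K)
        = ((Nat.fib n : ℚ) - 1) • 1 + (Nat.fib (n + 1) : ℚ) • (α : K) := by
      push_cast
      rw [pow_succ_eq_fib_add_fib_mul hsq, sub_smul, one_smul, Nat.cast_smul_eq_nsmul,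
        Nat.cast_smul_eq_nsmul, nsmul_eq_mul, nsmul_eq_mul, mul_one]
      ring
    apply Int.cast_injective (α := ℚ)
    rw [Algebra.coe_norm_int, hpow, Algebra.norm_smul_one_add_smul hK hα (a := 1) (b := 1)
      (by rw [one_smul, one_smul, hsq])]
    push_cast [goldenDelta]
    ring

def HasPrimitivePrimeDivisor (Δ : ℕ → ℤ) (n : ℕ) : Prop :=
  ∃ p : ℕ, p.Prime ∧ (p : ℤ) ∣ Δ n ∧ ∀ m : ℕ, 0 < m → m < n → Δ m ≠ 0 → ¬ (p : ℤ) ∣ Δ m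

namespace HasPrimitivePrimeDivisor

variable {Δ : ℕ → ℤ} {n : ℕ}

theorem of_prime_dvd {p : ℕ} (hp : p.Prime) (hdvd : (p : ℤ) ∣ Δ n)
    (hnot : ∀ m ∈ Ico 1 n, ¬ (p : ℤ) ∣ Δ m) : HasPrimitivePrimeDivisor Δ n :=
  ⟨p, hp, hdvd, fun m hm hmn _ => hnot m (mem_Ico.mpr ⟨hm, hmn⟩)⟩

theorem not_of_dvd_pow_prod (k : ℕ)
    (h : Δ n ∣ (∏ m ∈ (Ico 1 n).filter (Δ · ≠ 0), Δ m) ^ k) : ¬ HasPrimitivePrimeDivisor Δ n := by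
  rintro ⟨p, hp, hdvd, hprim⟩
  obtain ⟨m, hm, hpm⟩ := ((Nat.prime_iff_prime_int.mp hp).dvd_finsetProd_iff _).mp
    ((Nat.prime_iff_prime_int.mp hp).dvd_of_dvd_pow (hdvd.trans h))
  obtain ⟨hm, hm0⟩ := mem_filter.mp hm
  obtain ⟨hm1, hmn⟩ := mem_Ico.mp hm
  exact hprim m hm1 hmn hm0 hpm

end HasPrimitivePrimeDivisor

open HasPrimitivePrimeDivisor in
theorem not_hasPrimitivePrimeDivisor_goldenDelta_iff {n : ℕ} (h2 : 2 ≤ n) (h24 : n ≤ 24)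
    (hmod : n % 4 ≠ 2) :
    ¬ HasPrimitivePrimeDivisor goldenDelta n ↔ n = 12 ∨ n = 20 ∨ n = 24 := by
  interval_cases n <;> try omega
  -- `8` exceeds every exponent in the factorizations of `Δ_12`, `Δ_20` and `Δ_24`.
  all_goals first
    | exact iff_of_true (not_of_dvd_pow_prod 8 (by decide)) (by omega)
    | refine iff_of_false (not_not_intro ?_) (by omega)
  -- witnesses for `n = 3, 4, 5, 7, 8, 9, 11, 13, 15, 16, 17, 19, 21, 23`
  · exact of_prime_dvd (p := 2) (by norm_num) (by decide) (by decide)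
  · exact of_prime_dvd (p := 5) (by norm_num) (by decide) (by decide)
  · exact of_prime_dvd (p := 11) (by norm_num) (by decide) (by decide)
  · exact of_prime_dvd (p := 29) (by norm_num) (by decide) (by decide)
  · exact of_prime_dvd (p := 3) (by norm_num) (by decide) (by decide)
  · exact of_prime_dvd (p := 19) (by norm_num) (by decide) (by decide)
  · exact of_prime_dvd (p := 199) (by norm_num) (by decide) (by decide)
  · exact of_prime_dvd (p := 521) (by norm_num) (by decide) (by decide)
  · exact of_prime_dvd (p := 31) (by norm_num) (by decide) (by decide)
  · exact of_prime_dvd (p := 7) (by norm_num) (by decide) (by decide)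
  · exact of_prime_dvd (p := 3571) (by norm_num) (by decide) (by decide)
  · exact of_prime_dvd (p := 9349) (by norm_num) (by decide) (by decide)
  · exact of_prime_dvd (p := 211) (by norm_num) (by decide) (by decide)
  · exact of_prime_dvd (p := 461) (by norm_num) (by decide) (by decide)

/-- For the golden ratio `u = (1+√5)/2`, a unit of norm `-1` of the ring of integers of
`ℚ(√5)`, and `Δ_n = N_{ℚ(√5)/ℚ}(u^n - 1)`: among the indices `2 ≤ n ≤ 24` with
`n ≢ 2 (mod 4)` the terms without a primitive prime divisor are exactly
`Δ_12 = -320`, `Δ_20 = -15125` and `Δ_24 = -103680`.  (The unit term `Δ_1 = -1` has no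
prime divisors at all.) -/
theorem lehmerPierce_golden_ratio (K : Type*) [Field K] [NumberField K]
    (hdeg : Module.finrank ℚ K = 2) (σ : K →+* ℝ)
    (α : RingOfIntegers K) (hα : σ (α : K) = (1 + Real.sqrt 5) / 2)
    (Δ : ℕ → ℤ) (hΔ : ∀ n : ℕ, Δ n = Algebra.norm ℤ (α ^ n - 1)) :
    Δ 12 = -320 ∧ Δ 20 = -15125 ∧ Δ 24 = -103680 ∧
      ∀ n : ℕ, 2 ≤ n → n ≤ 24 → n % 4 ≠ 2 →
        ((¬ ∃ p : ℕ, p.Prime ∧ (p : ℤ) ∣ Δ n ∧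
            ∀ m : ℕ, 0 < m → m < n → Δ m ≠ 0 → ¬ (p : ℤ) ∣ Δ m) ↔
          (n = 12 ∨ n = 20 ∨ n = 24)) := by
  obtain rfl : Δ = goldenDelta := funext fun n => (hΔ n).trans <|
    norm_pow_sub_one_eq_goldenDelta hdeg (sq_eq_add_one_of_map_eq_goldenRatio σ hα)
      (notMem_range_algebraMap_of_map_eq_goldenRatio σ hα) n
  exact ⟨by decide, by decide, by decide,
    fun n h2 h24 hmod => not_hasPrimitivePrimeDivisor_goldenDelta_iff h2 h24 hmod⟩
end

section
/- For every integer n with 7 ≤ n ≤ 3375, the inequality ((1+√5)/2)^{φ(n)} < e^{5.03933}·n² implies n ≤ 90. -/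
/-!
Sorting the distinct prime factors of `n` increasingly, the `i`-th one is at least `i + 1`; this
gives `(ω(n) + 1)! ≤ n` and, by telescoping `p / (p - 1) ≤ (i + 1) / i`, `n / φ(n) ≤ ω(n) + 1`.
For `n ≤ 3375 < 7!` this means `φ(n) ≥ n / 6`, which makes `φ(n) ≥ 45` once `n ≥ 270`, and then
`((1 + √5) / 2) ^ φ(n)` outgrows `e^5.03933 · n²`. The remaining `91 ≤ n ≤ 269` are checked
by computation, using `809 / 500 ≤ (1 + √5) / 2` and `e^5.03933 < 155`.
-/

open Finset

namespace Finset

lemma card_add_two_le_of_forall_mem_Ico {s : Finset ℕ} {a : ℕ} (ha : 2 ≤ a)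
    (hs : ∀ x ∈ s, 2 ≤ x ∧ x < a) : #s + 2 ≤ a := by
  have : #s ≤ #(Ico 2 a) := card_le_card fun x hx => mem_Ico.mpr (hs x hx)
  rw [Nat.card_Ico] at this
  omega

lemma factorial_card_succ_le_prod {s : Finset ℕ} (hs : ∀ p ∈ s, 2 ≤ p) :
    (#s + 1).factorial ≤ ∏ p ∈ s, p := by
  induction s using Finset.induction_on_max with
  | empty => simp
  | insert a s hlt ih =>
    have ha : a ∉ s := fun h => lt_irrefl a (hlt a h)
    have hs' : ∀ p ∈ s, 2 ≤ p := fun p hp => hs p (mem_insert_of_mem hp)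
    have hcard : #s + 2 ≤ a := card_add_two_le_of_forall_mem_Ico (hs a (mem_insert_self a s))
      fun x hx => ⟨hs' x hx, hlt x hx⟩
    rw [card_insert_of_notMem ha, prod_insert ha, Nat.factorial_succ]
    exact Nat.mul_le_mul (by omega) (ih hs')

lemma prod_le_card_succ_mul_prod_sub_one {s : Finset ℕ} (hs : ∀ p ∈ s, 2 ≤ p) :
    ∏ p ∈ s, p ≤ (#s + 1) * ∏ p ∈ s, (p - 1) := by
  induction s using Finset.induction_on_max with
  | empty => simp
  | insert a s hlt ih =>
    have ha : a ∉ s := fun h => lt_irrefl a (hlt a h)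
    have hs' : ∀ p ∈ s, 2 ≤ p := fun p hp => hs p (mem_insert_of_mem hp)
    have hcard : #s + 2 ≤ a := card_add_two_le_of_forall_mem_Ico (hs a (mem_insert_self a s))
      fun x hx => ⟨hs' x hx, hlt x hx⟩
    -- `a / (a - 1) ≤ (#s + 2) / (#s + 1)` because `#s + 2 ≤ a`
    have hstep : a * (#s + 1) ≤ (#s + 2) * (a - 1) := by
      obtain ⟨b, rfl⟩ : ∃ b, a = #s + 2 + b := ⟨a - (#s + 2), by omega⟩
      rw [show #s + 2 + b - 1 = #s + 1 + b by omega]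
      nlinarith
    rw [card_insert_of_notMem ha, prod_insert ha, prod_insert ha]
    calc a * ∏ p ∈ s, p ≤ a * ((#s + 1) * ∏ p ∈ s, (p - 1)) := Nat.mul_le_mul_left _ (ih hs')
      _ = a * (#s + 1) * ∏ p ∈ s, (p - 1) := by ring
      _ ≤ (#s + 2) * (a - 1) * ∏ p ∈ s, (p - 1) := Nat.mul_le_mul_right _ hstep
      _ = (#s + 2) * ((a - 1) * ∏ p ∈ s, (p - 1)) := by ring

end Finset

namespace Nat

lemma factorial_card_primeFactors_succ_le {n : ℕ} (hn : n ≠ 0) :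
    (#n.primeFactors + 1).factorial ≤ n :=
  (factorial_card_succ_le_prod fun _ hp => (prime_of_mem_primeFactors hp).two_le).trans
    (le_of_dvd (pos_of_ne_zero hn) (prod_primeFactors_dvd n))

lemma le_card_primeFactors_succ_mul_totient (n : ℕ) :
    n ≤ (#n.primeFactors + 1) * n.totient := by
  have h2 : ∀ p ∈ n.primeFactors, 2 ≤ p := fun _ hp => (prime_of_mem_primeFactors hp).two_le
  have hpos : 0 < ∏ p ∈ n.primeFactors, p := prod_pos fun p hp => by linarith [h2 p hp]
  refine le_of_mul_le_mul_right ?_ hpos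
  calc n * ∏ p ∈ n.primeFactors, p
      ≤ n * ((#n.primeFactors + 1) * ∏ p ∈ n.primeFactors, (p - 1)) :=
        Nat.mul_le_mul_left _ (prod_le_card_succ_mul_prod_sub_one h2)
    _ = (#n.primeFactors + 1) * (n * ∏ p ∈ n.primeFactors, (p - 1)) := by ring
    _ = (#n.primeFactors + 1) * n.totient * ∏ p ∈ n.primeFactors, p := by
        rw [← totient_mul_prod_primeFactors, mul_assoc]

lemma le_six_mul_totient {n : ℕ} (hn : n < 7 !) : n ≤ 6 * n.totient := by
  rcases eq_or_ne n 0 with rfl | hn0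
  · simp
  have hcard : #n.primeFactors + 1 ≤ 6 := by
    by_contra! h
    exact (factorial_le h).trans (factorial_card_primeFactors_succ_le hn0) |>.not_gt hn
  exact (le_card_primeFactors_succ_mul_totient n).trans (Nat.mul_le_mul_right _ hcard)

end Nat

set_option maxRecDepth 100000 in
lemma mul_sq_mul_pow_totient_le_of_mem_Icc_91_269 :
    ∀ n ∈ Icc 91 269, 155 * n ^ 2 * 500 ^ n.totient ≤ 809 ^ n.totient := by
  decide

lemma mul_sq_mul_pow_totient_le {n : ℕ} (h91 : 91 ≤ n) (h3375 : n ≤ 3375) :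
    155 * n ^ 2 * 500 ^ n.totient ≤ 809 ^ n.totient := by
  rcases le_or_gt n 269 with hle | hgt
  · exact mul_sq_mul_pow_totient_le_of_mem_Icc_91_269 n (mem_Icc.mpr ⟨h91, hle⟩)
  have h6 := Nat.le_six_mul_totient (h3375.trans_lt (by decide))
  obtain ⟨m, hm⟩ : ∃ m, n.totient = 45 + m := ⟨n.totient - 45, by omega⟩
  rw [hm, pow_add, pow_add]
  calc 155 * n ^ 2 * (500 ^ 45 * 500 ^ m) ≤ 155 * 3375 ^ 2 * (500 ^ 45 * 500 ^ m) := by gcongr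
    _ = 155 * 3375 ^ 2 * 500 ^ 45 * 500 ^ m := by ring
    _ ≤ 809 ^ 45 * 809 ^ m := by gcongr <;> norm_num

lemma Real.exp_5_03933_lt_155 : Real.exp 5.03933 < 155 := by
  have he1 : Real.exp 1 ^ 5 < 2.7182818286 ^ 5 := by
    gcongr
    exact Real.exp_one_lt_d9
  have he2 : Real.exp 0.03933 ≤ 1 / (1 - 0.03933) :=
    Real.exp_bound_div_one_sub_of_interval (by norm_num) (by norm_num)
  calc Real.exp 5.03933 = Real.exp 1 ^ 5 * Real.exp 0.03933 := by
        rw [← Real.exp_nat_mul, ← Real.exp_add]; norm_num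
    _ < 2.7182818286 ^ 5 * (1 / (1 - 0.03933)) :=
        mul_lt_mul he1 he2 (Real.exp_pos _) (by positivity)
    _ < 155 := by norm_num

lemma Real.goldenRatio_ge_809_div_500 : (809 / 500 : ℝ) ≤ Real.goldenRatio := by
  have : (2.236 : ℝ) ≤ √5 := Real.le_sqrt_of_sq_le (by norm_num)
  rw [Real.goldenRatio]
  linarith

theorem totient_inequality_neg_one_bound_general (n : ℕ) (h3375 : n ≤ 3375)
    (h : ((1 + Real.sqrt 5) / 2) ^ n.totient < Real.exp 5.03933 * (n : ℝ) ^ 2) :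
    n ≤ 90 := by
  by_contra! h91
  have hnat : (155 : ℝ) * n ^ 2 * 500 ^ n.totient ≤ 809 ^ n.totient := by
    exact_mod_cast mul_sq_mul_pow_totient_le h91 h3375
  have hle : (155 : ℝ) * n ^ 2 ≤ Real.goldenRatio ^ n.totient :=
    calc (155 : ℝ) * n ^ 2 ≤ (809 / 500) ^ n.totient := by
          rw [div_pow, le_div_iff₀ (by positivity)]
          exact hnat
      _ ≤ Real.goldenRatio ^ n.totient := by
          gcongr
          exact Real.goldenRatio_ge_809_div_500
  have hlt : Real.exp 5.03933 * n ^ 2 < 155 * n ^ 2 := by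
    gcongr
    exact Real.exp_5_03933_lt_155
  exact (hle.trans_lt (h.trans hlt)).false

/-- For every `7 ≤ n ≤ 3375`, the inequality `((1+√5)/2)^{φ(n)} < e^{5.03933}·n²`
implies `n ≤ 90`. -/
theorem totient_inequality_neg_one_bound (n : ℕ) (h7 : 7 ≤ n) (h3375 : n ≤ 3375)
    (h : ((1 + Real.sqrt 5) / 2) ^ n.totient < Real.exp 5.03933 * (n : ℝ) ^ 2) :
    n ≤ 90 :=
  totient_inequality_neg_one_bound_general n h3375 h
end
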